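/- arXiv:math/0111037 — 9 statements merged into one kernel-verified Lean document; each statement's English description precedes it below -/
import Mathlib

section
/- If φ: (0,∞) → [0,∞) is C¹, increasing, satisfies ∫₁^∞ φ(t)/t² dt < ∞, and the function τ ↦ φ(e^τ) is convex, then lim_{t→∞} φ'(t) = 0. -/
/-!
Writing `ψ τ = φ (exp τ)`, convexity of `ψ` bounds `t φ'(t) = ψ'(log t)` by the slope of `ψ`
over `[log t, log t + 1]`, so monotonicity and positivity of `φ` give `0 ≤ φ'(t) ≤ φ(e t) / t`.
Since `φ` is nondecreasing, `φ(t) / t = ∫_t^∞ φ(t) / s² ds ≤ ∫_t^∞ φ(s) / s² ds`, a tail of a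
convergent integral; hence `φ(t) / t → 0`, and with it `φ'(t)`.
-/

open Set Filter MeasureTheory Topology

lemma integrableOn_Ioi_inv_sq {t : ℝ} (ht : 0 < t) :
    IntegrableOn (fun s : ℝ => (s ^ 2)⁻¹) (Ioi t) := by
  refine (integrableOn_Ioi_rpow_of_lt (by norm_num : (-2 : ℝ) < -1) ht).congr_fun
    (fun s hs => ?_) measurableSet_Ioi
  simp [Real.rpow_neg (ht.trans hs).le]

lemma integral_Ioi_inv_sq {t : ℝ} (ht : 0 < t) : ∫ s in Ioi t, (s ^ 2)⁻¹ = t⁻¹ := by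
  have h := integral_Ioi_rpow_of_lt (by norm_num : (-2 : ℝ) < -1) ht
  rw [setIntegral_congr_fun (g := fun s : ℝ => (s ^ 2)⁻¹) measurableSet_Ioi
      (fun s (hs : t < s) => by simp [Real.rpow_neg (ht.trans hs).le])] at h
  norm_num [h, Real.rpow_neg_one]

section

variable {φ φ' : ℝ → ℝ}

lemma div_self_le_integral_Ioi_div_sq (hmono : MonotoneOn φ (Ioi 0))
    {t : ℝ} (ht : 0 < t) (hint : IntegrableOn (fun s => φ s / s ^ 2) (Ioi t)) :
    φ t / t ≤ ∫ s in Ioi t, φ s / s ^ 2 :=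
  calc φ t / t = ∫ s in Ioi t, φ t / s ^ 2 := by
        simp_rw [div_eq_mul_inv, integral_const_mul, integral_Ioi_inv_sq ht]
    _ ≤ ∫ s in Ioi t, φ s / s ^ 2 := by
        refine setIntegral_mono_on ((integrableOn_Ioi_inv_sq ht).const_mul (φ t)) hint
          measurableSet_Ioi fun s hs => ?_
        exact div_le_div_of_nonneg_right (hmono ht (ht.trans hs) (le_of_lt hs)) (sq_nonneg s)

lemma tendsto_div_self_atTop_of_integrableOn_div_sq (hnonneg : ∀ t ∈ Ioi (0:ℝ), 0 ≤ φ t)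
    (hmono : MonotoneOn φ (Ioi 0)) {a : ℝ}
    (hint : IntegrableOn (fun t => φ t / t ^ 2) (Ioi a)) :
    Tendsto (fun t => φ t / t) atTop (𝓝 0) := by
  refine squeeze_zero' ?_ ?_
    (tendsto_integral_Ioi_zero (f := fun s => φ s / s ^ 2) (μ := volume) tendsto_id)
  · filter_upwards [eventually_gt_atTop 0] with t ht using div_nonneg (hnonneg t ht) ht.le
  · filter_upwards [eventually_gt_atTop 0, eventually_ge_atTop a] with t ht hat
    exact div_self_le_integral_Ioi_div_sq hmono ht (hint.mono_set (Ioi_subset_Ioi hat))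

lemma HasDerivAt.nonneg_of_monotoneOn_Ioi {t : ℝ} (hd : HasDerivAt φ (φ' t) t)
    (hmono : MonotoneOn φ (Ioi 0)) (ht : 0 < t) : 0 ≤ φ' t :=
  hmono.derivWithin_nonneg.trans_eq
    (hd.hasDerivWithinAt.derivWithin (isOpen_Ioi.uniqueDiffWithinAt ht))

lemma ConvexOn.mul_mul_deriv_le_of_comp_exp (hconv : ConvexOn ℝ univ (fun τ => φ (Real.exp τ)))
    {t h : ℝ} (ht : 0 < t) (hh : 0 < h) (hd : HasDerivAt φ (φ' t) t) :
    h * t * φ' t ≤ φ (Real.exp h * t) - φ t := by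
  have hψ : HasDerivAt (fun τ => φ (Real.exp τ)) (φ' t * t) (Real.log t) := by
    have hcomp :=
      hd.comp_of_eq (Real.log t) (Real.hasDerivAt_exp (Real.log t)) (Real.exp_log ht).symm
    rwa [Real.exp_log ht] at hcomp
  have hslope := hconv.le_slope_of_hasDerivAt (mem_univ _) (mem_univ (Real.log t + h))
    (by linarith) hψ
  rw [slope_def_field, Real.exp_add, Real.exp_log ht, add_sub_cancel_left,
    le_div_iff₀ hh] at hslope
  rw [mul_comm (Real.exp h) t]
  linarith

end

theorem stmt0_general (φ φ' : ℝ → ℝ)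
    (hderiv : ∀ t ∈ Ioi (0:ℝ), HasDerivAt φ (φ' t) t)
    (hnonneg : ∀ t ∈ Ioi (0:ℝ), 0 ≤ φ t)
    (hmono : MonotoneOn φ (Ioi 0))
    (hint : IntegrableOn (fun t => φ t / t ^ 2) (Ioi 1))
    (hconv : ConvexOn ℝ univ (fun τ => φ (Real.exp τ))) :
    Tendsto φ' atTop (nhds 0) := by
  have hratio := tendsto_div_self_atTop_of_integrableOn_div_sq hnonneg hmono hint
  have hbound : Tendsto (fun t => Real.exp 1 * (φ (Real.exp 1 * t) / (Real.exp 1 * t))) atTop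
      (𝓝 0) := by
    simpa using (hratio.comp (tendsto_id.const_mul_atTop (Real.exp_pos 1))).const_mul (Real.exp 1)
  refine squeeze_zero' ?_ ?_ hbound
  · filter_upwards [eventually_gt_atTop 0] with t ht
    exact (hderiv t ht).nonneg_of_monotoneOn_Ioi hmono ht
  · filter_upwards [eventually_gt_atTop 0] with t ht
    have hslope := hconv.mul_mul_deriv_le_of_comp_exp ht one_pos (hderiv t ht)
    rw [← mul_div_assoc, mul_div_mul_left _ _ (Real.exp_pos 1).ne', le_div_iff₀ ht]
    linarith [hnonneg t ht]

theorem stmt0 (φ φ' : ℝ → ℝ)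
    (hderiv : ∀ t ∈ Ioi (0:ℝ), HasDerivAt φ (φ' t) t)
    (hcont : ContinuousOn φ' (Ioi 0))
    (hnonneg : ∀ t ∈ Ioi (0:ℝ), 0 ≤ φ t)
    (hmono : MonotoneOn φ (Ioi 0))
    (hint : IntegrableOn (fun t => φ t / t ^ 2) (Ioi 1))
    (hconv : ConvexOn ℝ univ (fun τ => φ (Real.exp τ))) :
    Tendsto φ' atTop (nhds 0) :=
  stmt0_general φ φ' hderiv hnonneg hmono hint hconv
end

section
/- Let φ: (0,∞) → [0,∞) be increasing with ∫₁^∞ φ(t)/t² dt < ∞, and define q(y) = (2y/π) ∫₀^∞ φ(t)/(t²+y²) dt for y > 0. Then q'' (where it exists) satisfies q''(y) = −(4y/π) ∫₀^∞ t φ'(t)/(t²+y²)² dt, assuming φ is C¹ with appropriate integrability; in particular q is concave on (0,∞). -/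
open Set Filter MeasureTheory Topology

lemma intA (φ : ℝ → ℝ) (hφc : ContinuousOn φ (Ioi 0))
    (hnonneg : ∀ t ∈ Ioi (0:ℝ), 0 ≤ φ t) (hmono : MonotoneOn φ (Ioi 0))
    (hint : IntegrableOn (fun t => φ t / t ^ 2) (Ioi 1)) {y : ℝ} (hy : 0 < y) :
    IntegrableOn (fun t => φ t / (t ^ 2 + y ^ 2)) (Ioi 0) := by
  have hden : ∀ t : ℝ, (0:ℝ) < t ^ 2 + y ^ 2 := fun t => by positivity
  have hcont : ContinuousOn (fun t => φ t / (t ^ 2 + y ^ 2)) (Ioi 0) :=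
    hφc.div (by fun_prop) (fun t _ => (hden t).ne')
  have h1 : IntegrableOn (fun t => φ t / (t ^ 2 + y ^ 2)) (Ioc 0 1) := by
    refine ⟨(hcont.mono Ioc_subset_Ioi_self).aestronglyMeasurable measurableSet_Ioc,
      HasFiniteIntegral.restrict_of_bounded (C := φ 1 / y ^ 2) measure_Ioc_lt_top ?_⟩
    filter_upwards [ae_restrict_mem measurableSet_Ioc] with t ht
    have ht0 : (0:ℝ) < t := ht.1
    have hφt : 0 ≤ φ t := hnonneg t ht0
    have hle : φ t ≤ φ 1 := hmono ht0 (by norm_num) ht.2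
    rw [Real.norm_eq_abs, abs_of_nonneg (div_nonneg hφt (hden t).le)]
    exact div_le_div₀ (le_trans hφt hle) hle (by positivity) (by nlinarith)
  have h2 : IntegrableOn (fun t => φ t / (t ^ 2 + y ^ 2)) (Ioi 1) := by
    refine hint.mono' ((hcont.mono (Ioi_subset_Ioi zero_le_one)).aestronglyMeasurable measurableSet_Ioi) ?_
    filter_upwards [ae_restrict_mem measurableSet_Ioi] with t ht
    have ht1 : (1:ℝ) < t := ht
    have ht0 : (0:ℝ) < t := lt_trans one_pos ht1
    have hφt : 0 ≤ φ t := hnonneg t ht0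
    rw [Real.norm_eq_abs, abs_of_nonneg (div_nonneg hφt (hden t).le)]
    apply div_le_div₀ hφt le_rfl (by positivity) (by nlinarith)
  have := h1.union h2
  rwa [Ioc_union_Ioi_eq_Ioi zero_le_one] at this

lemma int_of_bound (φ : ℝ → ℝ) (hφc : ContinuousOn φ (Ioi 0))
    (hnonneg : ∀ t ∈ Ioi (0:ℝ), 0 ≤ φ t) (hmono : MonotoneOn φ (Ioi 0))
    (hint : IntegrableOn (fun t => φ t / t ^ 2) (Ioi 1)) {y C : ℝ} (hy : 0 < y)
    {f : ℝ → ℝ} (hf : AEStronglyMeasurable f (volume.restrict (Ioi 0)))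
    (hb : ∀ t ∈ Ioi (0:ℝ), |f t| ≤ C * (φ t / (t ^ 2 + y ^ 2))) :
    IntegrableOn f (Ioi 0) := by
  refine ((intA φ hφc hnonneg hmono hint hy).const_mul C).mono' hf ?_
  filter_upwards [ae_restrict_mem measurableSet_Ioi] with t ht
  simpa [Real.norm_eq_abs] using hb t ht

lemma hasDeriv1 (φ : ℝ → ℝ) (hφc : ContinuousOn φ (Ioi 0))
    (hnonneg : ∀ t ∈ Ioi (0:ℝ), 0 ≤ φ t) (hmono : MonotoneOn φ (Ioi 0))
    (hint : IntegrableOn (fun t => φ t / t ^ 2) (Ioi 1)) {y : ℝ} (hy : 0 < y) :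
    HasDerivAt (fun x => ∫ t in Ioi (0:ℝ), φ t / (t ^ 2 + x ^ 2))
      (∫ t in Ioi (0:ℝ), φ t * (-2 * y) / (t ^ 2 + y ^ 2) ^ 2) y := by
  have hden : ∀ (x t : ℝ), t ∈ Ioi (0:ℝ) → (0:ℝ) < t ^ 2 + x ^ 2 := by
    intro x t ht; have : (0:ℝ) < t := ht; positivity
  have hmeas : ∀ x : ℝ, AEStronglyMeasurable (fun t => φ t / (t ^ 2 + x ^ 2))
      (volume.restrict (Ioi 0)) := fun x =>
    (hφc.div (by fun_prop) (fun t ht => (hden x t ht).ne')).aestronglyMeasurable measurableSet_Ioi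
  have hmeas' : AEStronglyMeasurable (fun t => φ t * (-2 * y) / (t ^ 2 + y ^ 2) ^ 2)
      (volume.restrict (Ioi 0)) :=
    ((hφc.mul continuousOn_const).div (by fun_prop)
      (fun t ht => pow_ne_zero _ (hden y t ht).ne')).aestronglyMeasurable measurableSet_Ioi
  have key := hasDerivAt_integral_of_dominated_loc_of_deriv_le (s := Metric.ball y (y / 2))
      (F := fun x t => φ t / (t ^ 2 + x ^ 2))
      (F' := fun x t => φ t * (-2 * x) / (t ^ 2 + x ^ 2) ^ 2)
      (x₀ := y) (μ := volume.restrict (Ioi 0))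
      (bound := fun t => (12 / y) * (φ t / (t ^ 2 + (y / 2) ^ 2)))
      (Metric.ball_mem_nhds y (by positivity)) (Eventually.of_forall hmeas)
      (intA φ hφc hnonneg hmono hint hy) hmeas' ?_ ?_ ?_
  · exact key.2
  · -- bound
    filter_upwards [ae_restrict_mem measurableSet_Ioi] with t ht
    intro x hx
    have ht0 : (0:ℝ) < t := ht
    have hφt : 0 ≤ φ t := hnonneg t ht
    rw [Metric.mem_ball, Real.dist_eq] at hx
    have hx1 : y / 2 < x := by cases abs_lt.mp hx with | intro h1 h2 => linarith
    have hx2 : x < 3 * y / 2 := by cases abs_lt.mp hx with | intro h1 h2 => linarith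
    have hx0 : 0 < x := lt_trans (by positivity) hx1
    have hA : (0:ℝ) < t ^ 2 + x ^ 2 := by positivity
    have hB : (0:ℝ) < t ^ 2 + (y / 2) ^ 2 := by positivity
    have hAB : t ^ 2 + (y / 2) ^ 2 ≤ t ^ 2 + x ^ 2 := by nlinarith
    rw [Real.norm_eq_abs, abs_div, abs_of_nonneg (by positivity : (0:ℝ) ≤ (t ^ 2 + x ^ 2) ^ 2)]
    rw [abs_mul, abs_of_nonneg hφt]
    have habs : |(-2 : ℝ) * x| = 2 * x := by rw [abs_of_nonpos (by nlinarith)]; ring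
    rw [habs]
    have hR : 12 / y * (φ t / (t ^ 2 + (y / 2) ^ 2)) = 12 * φ t / (y * (t ^ 2 + (y / 2) ^ 2)) := by
      field_simp
    rw [hR, div_le_div_iff₀ (by positivity) (by positivity)]
    have h4 : (t ^ 2 + (y / 2) ^ 2) * (y / 2) ^ 2 ≤ (t ^ 2 + x ^ 2) ^ 2 := by nlinarith
    have h5 : 2 * x * y ≤ 3 * y ^ 2 := by nlinarith
    nlinarith [mul_le_mul_of_nonneg_left h5 (mul_nonneg hφt hB.le),
      mul_le_mul_of_nonneg_left h4 hφt]
  · exact (intA φ hφc hnonneg hmono hint (by positivity : (0:ℝ) < y/2)).const_mul _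
  · filter_upwards [ae_restrict_mem measurableSet_Ioi] with t ht
    intro x hx
    have ht0 : (0:ℝ) < t := ht
    have hA : (0:ℝ) < t ^ 2 + x ^ 2 := by positivity
    have h := (hasDerivAt_const x (φ t)).div
      (((hasDerivAt_pow 2 x).const_add (t ^ 2))) hA.ne'
    refine h.congr_deriv ?_
    field_simp
    norm_num
    ring

lemma hasDeriv2 (φ : ℝ → ℝ) (hφc : ContinuousOn φ (Ioi 0))
    (hnonneg : ∀ t ∈ Ioi (0:ℝ), 0 ≤ φ t) (hmono : MonotoneOn φ (Ioi 0))
    (hint : IntegrableOn (fun t => φ t / t ^ 2) (Ioi 1)) {y : ℝ} (hy : 0 < y) :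
    HasDerivAt (fun x => ∫ t in Ioi (0:ℝ), φ t * (t ^ 2 - x ^ 2) / (t ^ 2 + x ^ 2) ^ 2)
      (∫ t in Ioi (0:ℝ), φ t * (-2 * y) * (3 * t ^ 2 - y ^ 2) / (t ^ 2 + y ^ 2) ^ 3) y := by
  have hden : ∀ (x t : ℝ), t ∈ Ioi (0:ℝ) → (0:ℝ) < t ^ 2 + x ^ 2 := by
    intro x t ht; have : (0:ℝ) < t := ht; positivity
  have hmeas : ∀ x : ℝ, AEStronglyMeasurable (fun t => φ t * (t ^ 2 - x ^ 2) / (t ^ 2 + x ^ 2) ^ 2)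
      (volume.restrict (Ioi 0)) := fun x =>
    ((hφc.mul (by fun_prop)).div (by fun_prop)
      (fun t ht => pow_ne_zero _ (hden x t ht).ne')).aestronglyMeasurable measurableSet_Ioi
  have hmeas' : AEStronglyMeasurable
      (fun t => φ t * (-2 * y) * (3 * t ^ 2 - y ^ 2) / (t ^ 2 + y ^ 2) ^ 3)
      (volume.restrict (Ioi 0)) :=
    (((hφc.mul continuousOn_const).mul (by fun_prop)).div (by fun_prop)
      (fun t ht => pow_ne_zero _ (hden y t ht).ne')).aestronglyMeasurable measurableSet_Ioi
  have hFint : IntegrableOn (fun t => φ t * (t ^ 2 - y ^ 2) / (t ^ 2 + y ^ 2) ^ 2) (Ioi 0) := by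
    refine int_of_bound φ hφc hnonneg hmono hint hy (C := 1) (hmeas y) ?_
    intro t ht
    have ht0 : (0:ℝ) < t := ht
    have hφt : 0 ≤ φ t := hnonneg t ht
    have hA : (0:ℝ) < t ^ 2 + y ^ 2 := by positivity
    rw [abs_div, abs_of_nonneg (by positivity : (0:ℝ) ≤ (t ^ 2 + y ^ 2) ^ 2), abs_mul,
      abs_of_nonneg hφt, one_mul, div_le_div_iff₀ (by positivity) hA]
    have h1 : |t ^ 2 - y ^ 2| ≤ t ^ 2 + y ^ 2 := by
      rw [abs_le]; constructor <;> nlinarith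
    calc φ t * |t ^ 2 - y ^ 2| * (t ^ 2 + y ^ 2) ≤ φ t * (t ^ 2 + y ^ 2) * (t ^ 2 + y ^ 2) := by
          nlinarith [mul_le_mul_of_nonneg_left h1 hφt]
      _ = φ t * (t ^ 2 + y ^ 2) ^ 2 := by ring
  have key := hasDerivAt_integral_of_dominated_loc_of_deriv_le (s := Metric.ball y (y / 2))
      (F := fun x t => φ t * (t ^ 2 - x ^ 2) / (t ^ 2 + x ^ 2) ^ 2)
      (F' := fun x t => φ t * (-2 * x) * (3 * t ^ 2 - x ^ 2) / (t ^ 2 + x ^ 2) ^ 3)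
      (x₀ := y) (μ := volume.restrict (Ioi 0))
      (bound := fun t => (36 / y) * (φ t / (t ^ 2 + (y / 2) ^ 2)))
      (Metric.ball_mem_nhds y (by positivity)) (Eventually.of_forall hmeas) hFint hmeas' ?_ ?_ ?_
  · exact key.2
  · filter_upwards [ae_restrict_mem measurableSet_Ioi] with t ht
    intro x hx
    have ht0 : (0:ℝ) < t := ht
    have hφt : 0 ≤ φ t := hnonneg t ht
    rw [Metric.mem_ball, Real.dist_eq] at hx
    have hx1 : y / 2 < x := by cases abs_lt.mp hx with | intro h1 h2 => linarith
    have hx2 : x < 3 * y / 2 := by cases abs_lt.mp hx with | intro h1 h2 => linarith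
    have hx0 : 0 < x := lt_trans (by positivity) hx1
    have hA : (0:ℝ) < t ^ 2 + x ^ 2 := by positivity
    have hB : (0:ℝ) < t ^ 2 + (y / 2) ^ 2 := by positivity
    have hAB : t ^ 2 + (y / 2) ^ 2 ≤ t ^ 2 + x ^ 2 := by nlinarith
    rw [Real.norm_eq_abs, abs_div, abs_of_nonneg (by positivity : (0:ℝ) ≤ (t ^ 2 + x ^ 2) ^ 3)]
    have hR : 36 / y * (φ t / (t ^ 2 + (y / 2) ^ 2)) = 36 * φ t / (y * (t ^ 2 + (y / 2) ^ 2)) := by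
      field_simp
    rw [hR, div_le_div_iff₀ (by positivity) (by positivity)]
    have hnum : |φ t * (-2 * x) * (3 * t ^ 2 - x ^ 2)| ≤ φ t * (2 * x) * (3 * (t ^ 2 + x ^ 2)) := by
      rw [abs_mul, abs_mul, abs_of_nonneg hφt]
      have e1 : |(-2 : ℝ) * x| = 2 * x := by rw [abs_of_nonpos (by nlinarith)]; ring
      rw [e1]
      have e2 : |3 * t ^ 2 - x ^ 2| ≤ 3 * (t ^ 2 + x ^ 2) := by
        rw [abs_le]; constructor <;> nlinarith
      have : (0:ℝ) ≤ φ t * (2 * x) := by positivity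
      exact mul_le_mul_of_nonneg_left e2 this
    have step : |φ t * (-2 * x) * (3 * t ^ 2 - x ^ 2)| * (y * (t ^ 2 + (y / 2) ^ 2))
        ≤ (φ t * (2 * x) * (3 * (t ^ 2 + x ^ 2))) * (y * (t ^ 2 + (y / 2) ^ 2)) :=
      mul_le_mul_of_nonneg_right hnum (by positivity)
    refine step.trans ?_
    have h4 : (t ^ 2 + (y / 2) ^ 2) * (y / 2) ^ 2 ≤ (t ^ 2 + x ^ 2) ^ 2 := by nlinarith
    set A := t ^ 2 + x ^ 2 with hAdef
    set B := t ^ 2 + (y / 2) ^ 2 with hBdef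
    have c1 : φ t * (2 * x) * (3 * A) * (y * B) = φ t * A * B * (6 * (x * y)) := by ring
    have c2 : φ t * A * B * (6 * (x * y)) ≤ φ t * A * B * (9 * y ^ 2) :=
      mul_le_mul_of_nonneg_left (by nlinarith) (mul_nonneg (mul_nonneg hφt hA.le) hB.le)
    have c3 : φ t * A * B * (9 * y ^ 2) = 36 * (φ t * A) * (B * (y / 2) ^ 2) := by ring
    have c4 : 36 * (φ t * A) * (B * (y / 2) ^ 2) ≤ 36 * (φ t * A) * A ^ 2 :=
      mul_le_mul_of_nonneg_left h4 (by positivity)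
    calc φ t * (2 * x) * (3 * A) * (y * B) = φ t * A * B * (6 * (x * y)) := c1
      _ ≤ φ t * A * B * (9 * y ^ 2) := c2
      _ = 36 * (φ t * A) * (B * (y / 2) ^ 2) := c3
      _ ≤ 36 * (φ t * A) * A ^ 2 := c4
      _ = 36 * φ t * A ^ 3 := by ring
  · exact (intA φ hφc hnonneg hmono hint (by positivity : (0:ℝ) < y/2)).const_mul _
  · filter_upwards [ae_restrict_mem measurableSet_Ioi] with t ht
    intro x hx
    have ht0 : (0:ℝ) < t := ht
    have hA : (0:ℝ) < t ^ 2 + x ^ 2 := by positivity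
    have hu : HasDerivAt (fun x : ℝ => φ t * (t ^ 2 - x ^ 2)) (φ t * (-(2 * x))) x := by
      have := ((hasDerivAt_pow 2 x).const_sub (t ^ 2)).const_mul (φ t)
      simpa using this
    have hd : HasDerivAt (fun x : ℝ => (t ^ 2 + x ^ 2) ^ 2)
        (2 * (t ^ 2 + x ^ 2) ^ 1 * (2 * x ^ 1)) x :=
      ((hasDerivAt_pow 2 x).const_add (t ^ 2)).pow 2
    have h := hu.div hd (pow_ne_zero _ hA.ne')
    refine h.congr_deriv ?_
    field_simp
    ring

lemma philim (φ : ℝ → ℝ)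
    (hnonneg : ∀ t ∈ Ioi (0:ℝ), 0 ≤ φ t) (hmono : MonotoneOn φ (Ioi 0))
    (hint : IntegrableOn (fun t => φ t / t ^ 2) (Ioi 1)) :
    Tendsto (fun x => φ x / x) atTop (𝓝 0) := by
  set g : ℝ → ℝ := fun s => φ s / s ^ 2 with hg
  set F : ℝ → ℝ := fun x => ∫ s in (1:ℝ)..x, g s with hF
  have hIoc : ∀ a b : ℝ, 1 ≤ a → IntervalIntegrable g volume a (a * b) → True := fun _ _ _ _ => trivial
  have hii : ∀ a b : ℝ, 1 ≤ a → a ≤ b → IntervalIntegrable g volume a b := by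
    intro a b ha hab
    rw [intervalIntegrable_iff_integrableOn_Ioc_of_le hab]
    exact hint.mono_set (fun s hs => lt_of_le_of_lt ha hs.1)
  have hFtend : Tendsto F atTop (𝓝 (∫ s in Ioi (1:ℝ), g s)) :=
    intervalIntegral_tendsto_integral_Ioi 1 hint tendsto_id
  have hF2tend : Tendsto (fun x => F (2 * x)) atTop (𝓝 (∫ s in Ioi (1:ℝ), g s)) :=
    hFtend.comp (Tendsto.const_mul_atTop two_pos tendsto_id)
  have hhtend : Tendsto (fun x => 2 * (F (2 * x) - F x)) atTop (𝓝 0) := by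
    have := (hF2tend.sub hFtend).const_mul (2:ℝ)
    simpa using this
  refine squeeze_zero' ?_ ?_ hhtend
  · filter_upwards [eventually_ge_atTop (1:ℝ)] with x hx
    have hx0 : (0:ℝ) < x := lt_of_lt_of_le one_pos hx
    exact div_nonneg (hnonneg x hx0) hx0.le
  · filter_upwards [eventually_ge_atTop (1:ℝ)] with x hx
    have hx0 : (0:ℝ) < x := lt_of_lt_of_le one_pos hx
    have hxle : x ≤ 2 * x := by linarith
    have hsplit : F (2 * x) - F x = ∫ s in x..(2 * x), g s := by
      have := intervalIntegral.integral_add_adjacent_intervals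
        (hii 1 x le_rfl hx) (hii x (2 * x) hx hxle)
      simp only [hF]; rw [← this]; ring
    have hlow : φ x / (2 * x) ≤ ∫ s in x..(2 * x), g s := by
      have hfint : IntervalIntegrable (fun s => φ x * (s ^ 2)⁻¹) volume x (2 * x) := by
        apply ContinuousOn.intervalIntegrable
        apply continuousOn_const.mul (continuousOn_inv₀.comp (by fun_prop) ?_)
        intro s hs
        rw [uIcc_of_le hxle] at hs
        have : (0:ℝ) < s := lt_of_lt_of_le hx0 hs.1
        exact pow_ne_zero _ this.ne'
      have hcalc : (∫ s in x..(2 * x), φ x * (s ^ 2)⁻¹) = φ x / (2 * x) := by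
        have hder : ∀ s ∈ uIcc x (2 * x),
            HasDerivAt (fun s : ℝ => φ x * (-s⁻¹)) (φ x * (s ^ 2)⁻¹) s := by
          intro s hs
          rw [uIcc_of_le hxle] at hs
          have hs0 : (0:ℝ) < s := lt_of_lt_of_le hx0 hs.1
          have := ((hasDerivAt_inv hs0.ne').neg).const_mul (φ x)
          refine this.congr_deriv ?_
          ring
        rw [intervalIntegral.integral_eq_sub_of_hasDerivAt hder hfint]
        field_simp
        ring
      rw [← hcalc]
      apply intervalIntegral.integral_mono_on hxle hfint (hii x (2 * x) hx hxle)
      intro s hs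
      have hs0 : (0:ℝ) < s := lt_of_lt_of_le hx0 hs.1
      have hφle : φ x ≤ φ s := hmono hx0 hs0 hs.1
      rw [hg]
      calc φ x * (s ^ 2)⁻¹ ≤ φ s * (s ^ 2)⁻¹ :=
            mul_le_mul_of_nonneg_right hφle (by positivity)
        _ = φ s / s ^ 2 := by rw [div_eq_mul_inv]
    rw [hsplit]
    calc φ x / x = 2 * (φ x / (2 * x)) := by field_simp
      _ ≤ 2 * ∫ s in x..(2 * x), g s := by linarith

lemma ibp (φ φ' : ℝ → ℝ)
    (hderiv : ∀ t ∈ Ioi (0:ℝ), HasDerivAt φ (φ' t) t)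
    (hnonneg : ∀ t ∈ Ioi (0:ℝ), 0 ≤ φ t) (hmono : MonotoneOn φ (Ioi 0))
    (hint : IntegrableOn (fun t => φ t / t ^ 2) (Ioi 1))
    {y : ℝ} (hy : 0 < y)
    (hint' : IntegrableOn (fun t => t * φ' t / (t ^ 2 + y ^ 2) ^ 2) (Ioi 0)) :
    ∫ t in Ioi (0:ℝ), t * φ' t / (t ^ 2 + y ^ 2) ^ 2
      = ∫ t in Ioi (0:ℝ), φ t * (3 * t ^ 2 - y ^ 2) / (t ^ 2 + y ^ 2) ^ 3 := by
  have hφc : ContinuousOn φ (Ioi 0) :=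
    fun t ht => (hderiv t ht).continuousAt.continuousWithinAt
  have hden : ∀ (t : ℝ), t ∈ Ioi (0:ℝ) → (0:ℝ) < t ^ 2 + y ^ 2 := by
    intro t ht; have : (0:ℝ) < t := ht; positivity
  set v : ℝ → ℝ := fun t => t / (t ^ 2 + y ^ 2) ^ 2 with hvdef
  set v' : ℝ → ℝ := fun t => (y ^ 2 - 3 * t ^ 2) / (t ^ 2 + y ^ 2) ^ 3 with hv'def
  have hv : ∀ t ∈ Ioi (0:ℝ), HasDerivAt v (v' t) t := by
    intro t ht
    have hA : (0:ℝ) < t ^ 2 + y ^ 2 := hden t ht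
    have hd : HasDerivAt (fun t : ℝ => (t ^ 2 + y ^ 2) ^ 2)
        (2 * (t ^ 2 + y ^ 2) ^ 1 * (2 * t ^ 1)) t :=
      ((hasDerivAt_pow 2 t).add_const (y ^ 2)).pow 2
    have h := (hasDerivAt_id t).div hd (pow_ne_zero _ hA.ne')
    refine h.congr_deriv ?_
    rw [hv'def]
    field_simp
    simp only [id_eq]
    ring
  have hu'v : IntegrableOn (fun t => φ' t * v t) (Ioi 0) := by
    have : (fun t => φ' t * v t) = (fun t => t * φ' t / (t ^ 2 + y ^ 2) ^ 2) := by
      funext t; rw [hvdef]; ring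
    rw [this]; exact hint'
  have hv'c : ContinuousOn v' (Ioi 0) := by
    rw [hv'def]
    exact ContinuousOn.div (by fun_prop) (by fun_prop)
      (fun t ht => pow_ne_zero _ (hden t ht).ne')
  have huv' : IntegrableOn (fun t => φ t * v' t) (Ioi 0) := by
    refine int_of_bound φ hφc hnonneg hmono hint hy (C := 3 / y ^ 2)
      ((hφc.mul hv'c).aestronglyMeasurable measurableSet_Ioi) ?_
    intro t ht
    have ht0 : (0:ℝ) < t := ht
    have hφt : 0 ≤ φ t := hnonneg t ht
    have hA : (0:ℝ) < t ^ 2 + y ^ 2 := hden t ht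
    rw [hv'def]
    have e1 : φ t * ((y ^ 2 - 3 * t ^ 2) / (t ^ 2 + y ^ 2) ^ 3)
        = φ t * (y ^ 2 - 3 * t ^ 2) / (t ^ 2 + y ^ 2) ^ 3 := by ring
    rw [e1, abs_div, abs_of_nonneg (by positivity : (0:ℝ) ≤ (t ^ 2 + y ^ 2) ^ 3), abs_mul,
      abs_of_nonneg hφt]
    have hR : 3 / y ^ 2 * (φ t / (t ^ 2 + y ^ 2)) = 3 * φ t / (y ^ 2 * (t ^ 2 + y ^ 2)) := by
      field_simp
    rw [hR, div_le_div_iff₀ (by positivity) (by positivity)]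
    have e2 : |y ^ 2 - 3 * t ^ 2| ≤ 3 * (t ^ 2 + y ^ 2) := by
      rw [abs_le]; constructor <;> nlinarith
    set A := t ^ 2 + y ^ 2
    have hy2A : y ^ 2 ≤ A := by simp only [A]; nlinarith
    calc φ t * |y ^ 2 - 3 * t ^ 2| * (y ^ 2 * A)
        ≤ φ t * (3 * A) * (y ^ 2 * A) := by
          have := mul_le_mul_of_nonneg_left e2 hφt
          have h0 : (0:ℝ) ≤ y ^ 2 * A := by positivity
          nlinarith [mul_le_mul_of_nonneg_right (mul_le_mul_of_nonneg_left e2 hφt) h0]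
      _ = 3 * (φ t * A * (y ^ 2 * A)) := by ring
      _ ≤ 3 * (φ t * A * (A * A)) := by
          have : y ^ 2 * A ≤ A * A := mul_le_mul_of_nonneg_right hy2A hA.le
          have h1 : (0:ℝ) ≤ φ t * A := mul_nonneg hφt hA.le
          nlinarith [mul_le_mul_of_nonneg_left this h1]
      _ = 3 * φ t * A ^ 3 := by ring
  have h_zero : Tendsto (fun t => φ t * v t) (𝓝[>] (0:ℝ)) (𝓝 0) := by
    have hglim : Tendsto (fun t : ℝ => φ 1 * (t / y ^ 4)) (𝓝[>] (0:ℝ)) (𝓝 0) := by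
      have : Tendsto (fun t : ℝ => φ 1 * (t / y ^ 4)) (𝓝 (0:ℝ)) (𝓝 (φ 1 * (0 / y ^ 4))) :=
        (tendsto_id.div_const _).const_mul _
      simpa using this.mono_left nhdsWithin_le_nhds
    refine squeeze_zero' ?_ ?_ hglim
    · filter_upwards [self_mem_nhdsWithin] with t ht
      have ht0 : (0:ℝ) < t := ht
      have hA : (0:ℝ) < t ^ 2 + y ^ 2 := hden t ht
      exact mul_nonneg (hnonneg t ht) (by positivity)
    · filter_upwards [Ioo_mem_nhdsGT_of_mem (⟨le_rfl, one_pos⟩ : (0:ℝ) ∈ Ico 0 1)] with t ht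
      have ht0 : (0:ℝ) < t := ht.1
      have hφt : 0 ≤ φ t := hnonneg t ht.1
      have hφle : φ t ≤ φ 1 := hmono ht.1 (by norm_num) ht.2.le
      have hA : (0:ℝ) < t ^ 2 + y ^ 2 := hden t ht.1
      have hv_le : v t ≤ t / y ^ 4 := by
        rw [hvdef]
        apply div_le_div₀ (by positivity) le_rfl (by positivity)
        calc y ^ 4 = (y ^ 2) ^ 2 := by ring
          _ ≤ (t ^ 2 + y ^ 2) ^ 2 := by nlinarith
      have hv0 : 0 ≤ v t := by rw [hvdef]; positivity
      calc φ t * v t ≤ φ 1 * v t := mul_le_mul_of_nonneg_right hφle hv0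
        _ ≤ φ 1 * (t / y ^ 4) := mul_le_mul_of_nonneg_left hv_le (le_trans hφt hφle)
  have h_infty : Tendsto (fun t => φ t * v t) atTop (𝓝 0) := by
    refine squeeze_zero' ?_ ?_ (philim φ hnonneg hmono hint)
    · filter_upwards [eventually_gt_atTop (0:ℝ)] with t ht
      have hA : (0:ℝ) < t ^ 2 + y ^ 2 := hden t ht
      exact mul_nonneg (hnonneg t ht) (by rw [hvdef]; positivity)
    · filter_upwards [eventually_ge_atTop (1:ℝ)] with t ht
      have ht0 : (0:ℝ) < t := lt_of_lt_of_le one_pos ht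
      have hφt : 0 ≤ φ t := hnonneg t ht0
      have hA : (0:ℝ) < t ^ 2 + y ^ 2 := by positivity
      have h1 : v t ≤ 1 / t ^ 3 := by
        rw [hvdef]
        rw [div_le_div_iff₀ (by positivity) (by positivity)]
        calc t * t ^ 3 = (t ^ 2) ^ 2 := by ring
          _ ≤ (t ^ 2 + y ^ 2) ^ 2 := by nlinarith
          _ = 1 * (t ^ 2 + y ^ 2) ^ 2 := by ring
      calc φ t * v t ≤ φ t * (1 / t ^ 3) := mul_le_mul_of_nonneg_left h1 hφt
        _ = (φ t / t) * (1 / t ^ 2) := by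
            rw [div_mul_div_comm, mul_one, mul_one_div, ← pow_succ']
        _ ≤ (φ t / t) * 1 := by
            apply mul_le_mul_of_nonneg_left _ (div_nonneg hφt ht0.le)
            rw [div_le_one (by positivity)]
            nlinarith
        _ = φ t / t := by ring
  have hmain := integral_Ioi_deriv_mul_eq_sub (a := (0:ℝ)) (u := φ) (v := v)
      (u' := φ') (v' := v') hderiv hv ?_ h_zero h_infty
  · have hsplit : ∫ t in Ioi (0:ℝ), (φ' t * v t + φ t * v' t)
        = (∫ t in Ioi (0:ℝ), φ' t * v t) + ∫ t in Ioi (0:ℝ), φ t * v' t :=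
      integral_add hu'v huv'
    have hzero : (∫ t in Ioi (0:ℝ), φ' t * v t) + (∫ t in Ioi (0:ℝ), φ t * v' t) = 0 := by
      rw [← hsplit]
      simpa using hmain
    have e3 : ∫ t in Ioi (0:ℝ), t * φ' t / (t ^ 2 + y ^ 2) ^ 2
        = ∫ t in Ioi (0:ℝ), φ' t * v t := by
      congr 1; funext t; rw [hvdef]; ring
    have e4 : ∫ t in Ioi (0:ℝ), φ t * (3 * t ^ 2 - y ^ 2) / (t ^ 2 + y ^ 2) ^ 3
        = -∫ t in Ioi (0:ℝ), φ t * v' t := by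
      rw [← integral_neg]
      congr 1; funext t; rw [hv'def]; ring
    rw [e3, e4]; linarith
  · have : (fun t => φ' t * v t + φ t * v' t) = (φ' * v + φ * v') := rfl
    exact (hu'v.add huv')

lemma phi'nonneg (φ φ' : ℝ → ℝ)
    (hderiv : ∀ t ∈ Ioi (0:ℝ), HasDerivAt φ (φ' t) t)
    (hmono : MonotoneOn φ (Ioi 0)) : ∀ t ∈ Ioi (0:ℝ), 0 ≤ φ' t := by
  intro t ht
  have h := hderiv t ht
  rw [hasDerivAt_iff_tendsto_slope] at h
  have h2 : Tendsto (slope φ t) (𝓝[>] t) (𝓝 (φ' t)) :=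
    h.mono_left (nhdsWithin_mono t (fun x hx => ne_of_gt hx))
  refine ge_of_tendsto h2 ?_
  filter_upwards [self_mem_nhdsWithin] with x hx
  have hx' : t < x := hx
  have ht0 : (0:ℝ) < t := ht
  have hle : φ t ≤ φ x := hmono ht (lt_trans ht0 hx') hx'.le
  rw [slope_def_field]
  exact div_nonneg (by linarith) (by linarith)

theorem stmt4 (φ φ' : ℝ → ℝ)
    (hderiv : ∀ t ∈ Ioi (0:ℝ), HasDerivAt φ (φ' t) t)
    (hcont : ContinuousOn φ' (Ioi 0))
    (hnonneg : ∀ t ∈ Ioi (0:ℝ), 0 ≤ φ t)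
    (hmono : MonotoneOn φ (Ioi 0))
    (hint : IntegrableOn (fun t => φ t / t ^ 2) (Ioi 1))
    (hint' : ∀ y > (0:ℝ), IntegrableOn (fun t => t * φ' t / (t ^ 2 + y ^ 2) ^ 2) (Ioi 0))
    (q : ℝ → ℝ)
    (hq : ∀ y > (0:ℝ), q y = (2 * y / Real.pi) * ∫ t in Ioi (0:ℝ), φ t / (t ^ 2 + y ^ 2)) :
    (∀ y > (0:ℝ), deriv (deriv q) y =
      -(4 * y / Real.pi) * ∫ t in Ioi (0:ℝ), t * φ' t / (t ^ 2 + y ^ 2) ^ 2) ∧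
    ConcaveOn ℝ (Ioi 0) q := by
  have hφc : ContinuousOn φ (Ioi 0) :=
    fun t ht => (hderiv t ht).continuousAt.continuousWithinAt
  have hπ : (0:ℝ) < Real.pi := Real.pi_pos
  set Q1 : ℝ → ℝ := fun y =>
    (2 / Real.pi) * ∫ t in Ioi (0:ℝ), φ t * (t ^ 2 - y ^ 2) / (t ^ 2 + y ^ 2) ^ 2 with hQ1
  set Q2 : ℝ → ℝ := fun y =>
    -(4 * y / Real.pi) * ∫ t in Ioi (0:ℝ), t * φ' t / (t ^ 2 + y ^ 2) ^ 2 with hQ2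
  have hden : ∀ (y : ℝ), 0 < y → ∀ t ∈ Ioi (0:ℝ), (0:ℝ) < t ^ 2 + y ^ 2 := by
    intro y hy t ht; have : (0:ℝ) < t := ht; positivity
  -- q has derivative Q1 on Ioi 0
  have hq1 : ∀ y, 0 < y → HasDerivAt q (Q1 y) y := by
    intro y hy
    have hI' := hasDeriv1 φ hφc hnonneg hmono hint hy
    have hlin : HasDerivAt (fun x : ℝ => 2 * x / Real.pi) (2 / Real.pi) y := by
      simpa using ((hasDerivAt_id y).const_mul (2:ℝ)).div_const Real.pi
    have hprod := hlin.mul hI'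
    have heq : q =ᶠ[𝓝 y]
        (fun x => (2 * x / Real.pi) * ∫ t in Ioi (0:ℝ), φ t / (t ^ 2 + x ^ 2)) := by
      filter_upwards [Ioi_mem_nhds hy] with x hx
      exact hq x hx
    have hres := hprod.congr_of_eventuallyEq heq
    have hintA := intA φ hφc hnonneg hmono hint hy
    have hintF' : IntegrableOn (fun t => φ t * (-2 * y) / (t ^ 2 + y ^ 2) ^ 2) (Ioi 0) := by
      refine int_of_bound φ hφc hnonneg hmono hint hy (C := 2 / y)
        (((hφc.mul continuousOn_const).div (by fun_prop)
          (fun t ht => pow_ne_zero _ (hden y hy t ht).ne')).aestronglyMeasurable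
          measurableSet_Ioi) ?_
      intro t ht
      have ht0 : (0:ℝ) < t := ht
      have hφt : 0 ≤ φ t := hnonneg t ht
      have hA : (0:ℝ) < t ^ 2 + y ^ 2 := hden y hy t ht
      rw [abs_div, abs_of_nonneg (by positivity : (0:ℝ) ≤ (t ^ 2 + y ^ 2) ^ 2), abs_mul,
        abs_of_nonneg hφt]
      have e1 : |(-2 : ℝ) * y| = 2 * y := by rw [abs_of_nonpos (by nlinarith)]; ring
      rw [e1]
      have hR : 2 / y * (φ t / (t ^ 2 + y ^ 2)) = 2 * φ t / (y * (t ^ 2 + y ^ 2)) := by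
        field_simp
      rw [hR, div_le_div_iff₀ (by positivity) (by positivity)]
      have hy2A : y ^ 2 ≤ t ^ 2 + y ^ 2 := by nlinarith
      calc φ t * (2 * y) * (y * (t ^ 2 + y ^ 2)) = 2 * φ t * (y ^ 2 * (t ^ 2 + y ^ 2)) := by ring
        _ ≤ 2 * φ t * ((t ^ 2 + y ^ 2) * (t ^ 2 + y ^ 2)) := by
            have := mul_le_mul_of_nonneg_right hy2A (hden y hy t ht).le
            nlinarith [mul_le_mul_of_nonneg_left
              (mul_le_mul_of_nonneg_right hy2A (hden y hy t ht).le) (by positivity : (0:ℝ) ≤ 2 * φ t)]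
        _ = 2 * φ t * (t ^ 2 + y ^ 2) ^ 2 := by ring
    have hval : 2 / Real.pi * (∫ t in Ioi (0:ℝ), φ t / (t ^ 2 + y ^ 2))
        + 2 * y / Real.pi * ∫ t in Ioi (0:ℝ), φ t * (-2 * y) / (t ^ 2 + y ^ 2) ^ 2 = Q1 y := by
      rw [hQ1]
      have e2 : (2:ℝ) / Real.pi * (∫ t in Ioi (0:ℝ), φ t / (t ^ 2 + y ^ 2))
          + 2 * y / Real.pi * ∫ t in Ioi (0:ℝ), φ t * (-2 * y) / (t ^ 2 + y ^ 2) ^ 2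
          = (2 / Real.pi) * ((∫ t in Ioi (0:ℝ), φ t / (t ^ 2 + y ^ 2))
            + y * ∫ t in Ioi (0:ℝ), φ t * (-2 * y) / (t ^ 2 + y ^ 2) ^ 2) := by ring
      rw [e2]
      congr 1
      rw [← integral_const_mul, ← integral_add hintA (hintF'.const_mul y)]
      refine setIntegral_congr_fun measurableSet_Ioi (fun t ht => ?_)
      have hA : (t ^ 2 + y ^ 2) ≠ 0 := (hden y hy t ht).ne'
      field_simp
      ring
    rw [← hval]
    exact hres
  -- Q1 has derivative Q2 on Ioi 0
  have hq2 : ∀ y, 0 < y → HasDerivAt Q1 (Q2 y) y := by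
    intro y hy
    have hG := (hasDeriv2 φ hφc hnonneg hmono hint hy).const_mul (2 / Real.pi)
    have hval : (2 / Real.pi) * ∫ t in Ioi (0:ℝ),
        φ t * (-2 * y) * (3 * t ^ 2 - y ^ 2) / (t ^ 2 + y ^ 2) ^ 3 = Q2 y := by
      rw [hQ2]
      simp only []
      rw [ibp φ φ' hderiv hnonneg hmono hint hy (hint' y hy)]
      have e : ∀ t : ℝ, φ t * (-2 * y) * (3 * t ^ 2 - y ^ 2) / (t ^ 2 + y ^ 2) ^ 3
          = (-2 * y) * (φ t * (3 * t ^ 2 - y ^ 2) / (t ^ 2 + y ^ 2) ^ 3) := fun t => by ring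
      simp only [e]
      rw [integral_const_mul]
      ring
    rw [← hval]
    exact hG
  -- nonpositivity of Q2
  have hQ2le : ∀ y, 0 < y → Q2 y ≤ 0 := by
    intro y hy
    rw [hQ2]
    simp only []
    rw [neg_mul]
    refine neg_nonpos.mpr (mul_nonneg (by positivity) ?_)
    refine setIntegral_nonneg measurableSet_Ioi (fun t ht => ?_)
    have ht0 : (0:ℝ) < t := ht
    exact div_nonneg (mul_nonneg ht0.le (phi'nonneg φ φ' hderiv hmono t ht))
      (by positivity)
  constructor
  · intro y hy
    have hdq : deriv q =ᶠ[𝓝 y] Q1 := by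
      filter_upwards [Ioi_mem_nhds hy] with x hx
      exact (hq1 x hx).deriv
    have : deriv (deriv q) y = deriv Q1 y := hdq.deriv_eq
    rw [this, (hq2 y hy).deriv]
  · refine concaveOn_of_hasDerivWithinAt2_nonpos (f' := Q1) (f'' := Q2) (convex_Ioi 0)
      (fun x hx => (hq1 x hx).continuousAt.continuousWithinAt) ?_ ?_ ?_
    · intro x hx
      rw [interior_Ioi] at hx
      exact (hq1 x hx).hasDerivWithinAt
    · intro x hx
      rw [interior_Ioi] at hx
      exact (hq2 x hx).hasDerivWithinAt
    · intro x hx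
      rw [interior_Ioi] at hx
      exact hQ2le x hx
end

section
/- Under the assumptions that φ is C¹, nonnegative, increasing on (0,∞), satisfies ∫₁^∞ φ(t)/t² dt < ∞, and the function t φ'(t) is nondecreasing (condition (iv-a)), the second derivative q''(y) = −(4y/π)∫₀^∞ tφ'(t)/(t²+y²)² dt satisfies |q''(y)| ≥ φ'(y)/(3π y) for all y > 0. -/
/-!
Since `φ` is nondecreasing, `φ' ≥ 0`, so the integrand `t φ'(t) / (t² + y²)²` is nonnegative and the
integral over `(0, ∞)` dominates the one over `(y, ∞)`. There `t φ'(t) ≥ y φ'(y)` by (iv-a) and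
`(t² + y²)² ≤ 4 t⁴`, so the integrand is at least `y φ'(y) / (4 t⁴)`, whose integral over `(y, ∞)`
is `φ'(y) / (12 y²)`. Multiplying by `4 y / π` gives the bound.
-/

open Set Filter MeasureTheory

lemma HasDerivAt.nonneg_of_monotoneOn_of_isOpen {f : ℝ → ℝ} {f' x : ℝ} {s : Set ℝ}
    (hd : HasDerivAt f f' x) (hs : IsOpen s) (hx : x ∈ s) (hf : MonotoneOn f s) : 0 ≤ f' := by
  have hacc : AccPt x (𝓟 s) := by
    simpa using (PerfectSpace.univ_preperfect x (mem_univ x)).nhds_inter (hs.mem_nhds hx)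
  exact hd.hasDerivWithinAt.nonneg_of_monotoneOn hacc hf

lemma sq_sq_add_sq_le_four_mul_pow_four {t y : ℝ} (hy : 0 ≤ y) (hyt : y ≤ t) :
    (t ^ 2 + y ^ 2) ^ 2 ≤ 4 * t ^ 4 := by
  have hy2 : y ^ 2 ≤ t ^ 2 := pow_le_pow_left₀ hy hyt 2
  nlinarith [mul_nonneg (sub_nonneg.mpr hy2) (by positivity : (0:ℝ) ≤ 3 * t ^ 2 + y ^ 2)]

lemma integral_Ioi_rpow_neg_four {y : ℝ} (hy : 0 < y) :
    ∫ t in Ioi y, t ^ (-4 : ℝ) = 1 / (3 * y ^ 3) := by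
  rw [integral_Ioi_rpow_of_lt (by norm_num) hy, show (-4:ℝ) + 1 = -(3:ℕ) by norm_num,
    Real.rpow_neg hy.le, Real.rpow_natCast]
  field_simp
  norm_num

lemma le_integral_Ioi_div_sq_add_sq_sq (ψ : ℝ → ℝ) {y : ℝ} (hy : 0 < y)
    (hψ : ∀ t ∈ Ioi (0:ℝ), 0 ≤ ψ t) (hψy : ∀ t ∈ Ioi y, ψ y ≤ ψ t)
    (hint : IntegrableOn (fun t => ψ t / (t ^ 2 + y ^ 2) ^ 2) (Ioi 0)) :
    ψ y / (12 * y ^ 3) ≤ ∫ t in Ioi (0:ℝ), ψ t / (t ^ 2 + y ^ 2) ^ 2 := by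
  have hψy0 : 0 ≤ ψ y := hψ y hy
  have hminorant : ∀ t ∈ Ioi y, ψ y / 4 * t ^ (-4 : ℝ) ≤ ψ t / (t ^ 2 + y ^ 2) ^ 2 := by
    intro t (hyt : y < t)
    have ht : 0 < t := hy.trans hyt
    rw [Real.rpow_neg ht.le, show (4:ℝ) = (4:ℕ) by norm_num, Real.rpow_natCast, ← div_eq_mul_inv,
      div_div, div_le_div_iff₀ (by positivity) (by positivity)]
    push_cast
    exact mul_le_mul (hψy t hyt) (sq_sq_add_sq_le_four_mul_pow_four hy.le hyt.le)
      (by positivity) (hψ t ht)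
  calc ψ y / (12 * y ^ 3) = ∫ t in Ioi y, ψ y / 4 * t ^ (-4 : ℝ) := by
        rw [integral_const_mul, integral_Ioi_rpow_neg_four hy]
        field_simp
        ring
    _ ≤ ∫ t in Ioi y, ψ t / (t ^ 2 + y ^ 2) ^ 2 :=
        setIntegral_mono_on ((integrableOn_Ioi_rpow_of_lt (by norm_num) hy).const_mul _)
          (hint.mono_set (Ioi_subset_Ioi hy.le)) measurableSet_Ioi hminorant
    _ ≤ ∫ t in Ioi (0:ℝ), ψ t / (t ^ 2 + y ^ 2) ^ 2 := by
        refine setIntegral_mono_set hint ?_ (Ioi_subset_Ioi hy.le).eventuallyLE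
        filter_upwards [ae_restrict_mem measurableSet_Ioi] with t ht
        exact div_nonneg (hψ t ht) (by positivity)

theorem stmt5_general (φ φ' : ℝ → ℝ)
    (hderiv : ∀ t ∈ Ioi (0:ℝ), HasDerivAt φ (φ' t) t)
    (hmono : MonotoneOn φ (Ioi 0))
    (hiva : MonotoneOn (fun t => t * φ' t) (Ioi 0))
    (hint' : ∀ y > (0:ℝ), IntegrableOn (fun t => t * φ' t / (t ^ 2 + y ^ 2) ^ 2) (Ioi 0)) :
    ∀ y > (0:ℝ),
      |-(4 * y / Real.pi) * ∫ t in Ioi (0:ℝ), t * φ' t / (t ^ 2 + y ^ 2) ^ 2|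
        ≥ φ' y / (3 * Real.pi * y) := by
  intro y hy
  have hφ' : ∀ t ∈ Ioi (0:ℝ), 0 ≤ φ' t := fun t ht =>
    (hderiv t ht).nonneg_of_monotoneOn_of_isOpen isOpen_Ioi ht hmono
  have hlower := le_integral_Ioi_div_sq_add_sq_sq (fun t => t * φ' t) hy
    (fun t ht => mul_nonneg (le_of_lt ht) (hφ' t ht))
    (fun t ht => hiva hy (hy.trans ht) (le_of_lt ht)) (hint' y hy)
  have hπ := Real.pi_pos
  have hnonneg : 0 ≤ y * φ' y / (12 * y ^ 3) := by have := hφ' y hy; positivity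
  rw [abs_mul, abs_neg, abs_of_pos (by positivity), abs_of_nonneg (hnonneg.trans hlower), ge_iff_le]
  calc φ' y / (3 * Real.pi * y) = 4 * y / Real.pi * (y * φ' y / (12 * y ^ 3)) := by
        field_simp; ring
    _ ≤ _ := mul_le_mul_of_nonneg_left hlower (by positivity)

theorem stmt5 (φ φ' : ℝ → ℝ)
    (hderiv : ∀ t ∈ Ioi (0:ℝ), HasDerivAt φ (φ' t) t)
    (hcont : ContinuousOn φ' (Ioi 0))
    (hnonneg : ∀ t ∈ Ioi (0:ℝ), 0 ≤ φ t)
    (hmono : MonotoneOn φ (Ioi 0))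
    (hint : IntegrableOn (fun t => φ t / t ^ 2) (Ioi 1))
    (hiva : MonotoneOn (fun t => t * φ' t) (Ioi 0))
    (hint' : ∀ y > (0:ℝ), IntegrableOn (fun t => t * φ' t / (t ^ 2 + y ^ 2) ^ 2) (Ioi 0)) :
    ∀ y > (0:ℝ),
      |-(4 * y / Real.pi) * ∫ t in Ioi (0:ℝ), t * φ' t / (t ^ 2 + y ^ 2) ^ 2|
        ≥ φ' y / (3 * Real.pi * y) :=
  stmt5_general φ φ' hderiv hmono hiva hint'
end

section
/- Let φ: (0,∞) → [0,∞) be C¹ and nondecreasing with ∫₁^∞ φ(t)/t² dt < ∞. Then |q''(y)| = (4y/π)∫₀^∞ tφ'(t)/(t²+y²)² dt ≤ (24/(π y)) ∫_y^∞ φ(t)/t² dt for all y ≥ 1. -/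
/-!
Monotonicity gives `φ' ≥ 0`, and we split the integral at `t = y`. On `(0, y]` the kernel
`t / (t² + y²)²` is at most `1 / y³`, so that piece is at most `φ(y) / y³`; the value of `φ`
near `0` enters only through `φ ≥ 0`. On `(y, ∞)` the kernel is at most `1 / t³`, and
integrating by parts,
`∫_y^∞ φ'/t³ = 3 ∫_y^∞ φ/t⁴ - φ(y)/y³ ≤ 3 y⁻² ∫_y^∞ φ/t² - φ(y)/y³`;
the boundary term at infinity vanishes because both `φ/t³` and its derivative are integrable.
The two `φ(y)/y³` terms cancel, which gives the estimate even with `12` in place of `24`.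
-/

open Set Filter MeasureTheory Topology

theorem setIntegral_Ioc_le_of_hasDerivAt_of_le {f g g' : ℝ → ℝ} {a b : ℝ} (hab : a < b)
    (hf : IntegrableOn f (Ioc a b)) (hg : ∀ t ∈ Ioc a b, HasDerivAt g (g' t) t)
    (hfg : ∀ t ∈ Ioc a b, f t ≤ g' t) (hg₀ : ∀ t ∈ Ioc a b, 0 ≤ g t) :
    ∫ t in Ioc a b, f t ≤ g b := by
  have hf' : IntegrableOn f (Icc a b) := (integrableOn_Icc_iff_integrableOn_Ioc).2 hf
  have hcont : ContinuousWithinAt (fun ε => ∫ t in ε..b, f t) (Ioi a) a := by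
    have := intervalIntegral.continuousOn_primitive_interval_left (uIcc_of_le hab.le ▸ hf')
    rw [uIcc_of_le hab.le] at this
    exact (this a (left_mem_Icc.2 hab.le)).mono_of_mem_nhdsWithin (Icc_mem_nhdsGT hab)
  rw [← intervalIntegral.integral_of_le hab.le]
  refine le_of_tendsto hcont ?_
  filter_upwards [Ioo_mem_nhdsGT hab] with ε hε
  have hεb : Icc ε b ⊆ Ioc a b := Icc_subset_Ioc_iff hε.2.le |>.2 ⟨hε.1, le_rfl⟩
  calc ∫ t in ε..b, f t ≤ g b - g ε :=
        intervalIntegral.integral_le_sub_of_hasDeriv_right_of_le hε.2.le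
          (fun t ht => (hg t (hεb ht)).continuousAt.continuousWithinAt)
          (fun t ht => (hg t (hεb (Ioo_subset_Icc_self ht))).hasDerivWithinAt)
          (hf'.mono_set (hεb.trans Ioc_subset_Icc_self))
          (fun t ht => hfg t (hεb (Ioo_subset_Icc_self ht)))
    _ ≤ g b := sub_le_self _ (hg₀ ε ⟨hε.1, hε.2.le⟩)

theorem integrableOn_Ioi_div_pow_of_le {h : ℝ → ℝ} {y : ℝ} {m n : ℕ} (hy : 0 < y)
    (hh : IntegrableOn (fun t => h t / t ^ m) (Ioi y)) (hmn : m ≤ n) :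
    IntegrableOn (fun t => h t / t ^ n) (Ioi y) := by
  obtain ⟨k, rfl⟩ := Nat.exists_eq_add_of_le hmn
  simp only [pow_add, ← div_div, div_eq_mul_inv (_ / _)]
  refine hh.mul_bdd (c := (y ^ k)⁻¹) (by fun_prop) ?_
  filter_upwards [ae_restrict_mem measurableSet_Ioi] with t ht
  rw [norm_inv, norm_pow, Real.norm_of_nonneg (hy.trans ht).le]
  gcongr
  exact ht.le

theorem mul_div_sq_add_sq_sq_le_div_cube {c t y : ℝ} (hc : 0 ≤ c) (ht : 0 < t) :
    t * c / (t ^ 2 + y ^ 2) ^ 2 ≤ c / t ^ 3 := by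
  calc t * c / (t ^ 2 + y ^ 2) ^ 2 ≤ t * c / (t ^ 2) ^ 2 := by gcongr; nlinarith [sq_nonneg y]
    _ = c / t ^ 3 := by field_simp

theorem mul_div_sq_add_sq_sq_le_div_cube_of_le {c t y : ℝ} (hc : 0 ≤ c) (ht : 0 ≤ t)
    (hty : t ≤ y) :
    t * c / (t ^ 2 + y ^ 2) ^ 2 ≤ c / y ^ 3 := by
  rcases ht.eq_or_lt with rfl | ht
  · simp only [zero_mul, zero_div]; positivity
  have hy : 0 < y := ht.trans_le hty
  calc t * c / (t ^ 2 + y ^ 2) ^ 2 ≤ y * c / (y ^ 2) ^ 2 := by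
        gcongr
        nlinarith [sq_nonneg t]
    _ = c / y ^ 3 := by field_simp

theorem integrableOn_Ioi_div_cube_of_mul_div_sq_add_sq_sq {g : ℝ → ℝ} {y : ℝ} (hy : 0 < y)
    (h : IntegrableOn (fun t => t * g t / (t ^ 2 + y ^ 2) ^ 2) (Ioi y)) :
    IntegrableOn (fun t => g t / t ^ 3) (Ioi y) := by
  have hmul := h.mul_bdd (g := fun t => (t ^ 2 + y ^ 2) ^ 2 / t ^ 4) (c := 4)
    (Measurable.aestronglyMeasurable (by fun_prop)) ?_
  · refine IntegrableOn.congr_fun hmul (fun t ht => ?_) measurableSet_Ioi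
    have ht0 : t ≠ 0 := (hy.trans ht).ne'
    field_simp
  filter_upwards [ae_restrict_mem measurableSet_Ioi] with t ht
  have ht0 : 0 < t := hy.trans ht
  rw [Real.norm_of_nonneg (by positivity), div_le_iff₀ (by positivity)]
  have : y ^ 2 ≤ t ^ 2 := by gcongr; exact ht.le
  nlinarith

theorem integral_Ioi_deriv_div_cube {φ φ' : ℝ → ℝ} {y : ℝ} (hy : 0 < y)
    (hderiv : ∀ t ∈ Ici y, HasDerivAt φ (φ' t) t)
    (hφ' : IntegrableOn (fun t => φ' t / t ^ 3) (Ioi y))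
    (hφ : IntegrableOn (fun t => φ t / t ^ 2) (Ioi y)) :
    ∫ t in Ioi y, φ' t / t ^ 3 = 3 * (∫ t in Ioi y, φ t / t ^ 4) - φ y / y ^ 3 := by
  have hφ4 : IntegrableOn (fun t => 3 * (φ t / t ^ 4)) (Ioi y) :=
    (integrableOn_Ioi_div_pow_of_le hy hφ (by norm_num)).const_mul 3
  have hderiv' : ∀ t ∈ Ici y, HasDerivAt (fun u => φ u / u ^ 3)
      (φ' t / t ^ 3 - 3 * (φ t / t ^ 4)) t := by
    intro t ht
    have ht0 : t ≠ 0 := (hy.trans_le ht).ne'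
    refine ((hderiv t ht).div (hasDerivAt_pow 3 t) (pow_ne_zero 3 ht0)).congr_deriv ?_
    field_simp
    ring
  have hint' : IntegrableOn (fun t => φ' t / t ^ 3 - 3 * (φ t / t ^ 4)) (Ioi y) := hφ'.sub hφ4
  have hlim : Tendsto (fun u => φ u / u ^ 3) atTop (𝓝 0) := by
    exact tendsto_zero_of_hasDerivAt_of_integrableOn_Ioi
      (fun t ht => hderiv' t (Ioi_subset_Ici_self ht)) hint'
      (integrableOn_Ioi_div_pow_of_le hy hφ (by norm_num))
  have hFTC := integral_Ioi_of_hasDerivAt_of_tendsto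
    (hderiv' y (mem_Ici.2 le_rfl)).continuousAt.continuousWithinAt
    (fun t ht => hderiv' t (Ioi_subset_Ici_self ht)) hint' hlim
  rw [integral_sub hφ' hφ4, integral_const_mul] at hFTC
  linear_combination hFTC

theorem integral_Ioi_zero_mul_deriv_div_le {φ φ' : ℝ → ℝ} {y : ℝ} (hy : 0 < y)
    (hderiv : ∀ t ∈ Ioi (0:ℝ), HasDerivAt φ (φ' t) t)
    (hnonneg : ∀ t ∈ Ioi (0:ℝ), 0 ≤ φ t) (hmono : MonotoneOn φ (Ioi 0))
    (hf : IntegrableOn (fun t => t * φ' t / (t ^ 2 + y ^ 2) ^ 2) (Ioi 0))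
    (hφ : IntegrableOn (fun t => φ t / t ^ 2) (Ioi y)) :
    ∫ t in Ioi (0:ℝ), t * φ' t / (t ^ 2 + y ^ 2) ^ 2
      ≤ 3 * (∫ t in Ioi y, φ t / t ^ 2) / y ^ 2 := by
  have hφ'₀ : ∀ t ∈ Ioi (0:ℝ), 0 ≤ φ' t := fun t ht =>
    (hderiv t ht).hasDerivWithinAt.nonneg_of_monotoneOn (isOpen_Ioi.preperfect t ht) hmono
  have hIoi : Ioi y ⊆ Ioi 0 := Ioi_subset_Ioi hy.le
  have hnear : ∫ t in Ioc 0 y, t * φ' t / (t ^ 2 + y ^ 2) ^ 2 ≤ φ y / y ^ 3 :=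
    setIntegral_Ioc_le_of_hasDerivAt_of_le hy (hf.mono_set Ioc_subset_Ioi_self)
      (fun t ht => (hderiv t ht.1).div_const _)
      (fun t ht => mul_div_sq_add_sq_sq_le_div_cube_of_le (hφ'₀ t ht.1) ht.1.le ht.2)
      (fun t ht => div_nonneg (hnonneg t ht.1) (by positivity))
  have hφ' : IntegrableOn (fun t => φ' t / t ^ 3) (Ioi y) :=
    integrableOn_Ioi_div_cube_of_mul_div_sq_add_sq_sq hy (hf.mono_set hIoi)
  have hfar : ∫ t in Ioi y, t * φ' t / (t ^ 2 + y ^ 2) ^ 2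
      ≤ 3 * (∫ t in Ioi y, φ t / t ^ 4) - φ y / y ^ 3 :=
    (setIntegral_mono_on (hf.mono_set hIoi) hφ' measurableSet_Ioi fun t ht =>
      mul_div_sq_add_sq_sq_le_div_cube (hφ'₀ t (hIoi ht)) (hy.trans ht)).trans_eq
      (integral_Ioi_deriv_div_cube hy (fun t ht => hderiv t (hy.trans_le ht)) hφ' hφ)
  have hquartic : ∫ t in Ioi y, φ t / t ^ 4 ≤ (∫ t in Ioi y, φ t / t ^ 2) / y ^ 2 := by
    rw [← integral_div]
    refine setIntegral_mono_on (integrableOn_Ioi_div_pow_of_le hy hφ (by norm_num))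
      (hφ.div_const _) measurableSet_Ioi fun t ht => ?_
    rw [show φ t / t ^ 4 = φ t / t ^ 2 / t ^ 2 by rw [div_div, ← pow_add]]
    have ht0 : 0 < t := hy.trans ht
    gcongr
    · exact div_nonneg (hnonneg t ht0) (sq_nonneg t)
    · exact ht.le
  rw [← Ioc_union_Ioi_eq_Ioi hy.le, setIntegral_union (Ioc_disjoint_Ioi le_rfl) measurableSet_Ioi
    (hf.mono_set Ioc_subset_Ioi_self) (hf.mono_set hIoi), mul_div_assoc]
  linarith

theorem stmt7_general (φ φ' : ℝ → ℝ)
    (hderiv : ∀ t ∈ Ioi (0:ℝ), HasDerivAt φ (φ' t) t)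
    (hnonneg : ∀ t ∈ Ioi (0:ℝ), 0 ≤ φ t)
    (hmono : MonotoneOn φ (Ioi 0))
    (hint : IntegrableOn (fun t => φ t / t ^ 2) (Ioi 1))
    (hint' : ∀ y > (0:ℝ), IntegrableOn (fun t => t * φ' t / (t ^ 2 + y ^ 2) ^ 2) (Ioi 0)) :
    ∀ y ≥ (1:ℝ),
      (4 * y / Real.pi) * ∫ t in Ioi (0:ℝ), t * φ' t / (t ^ 2 + y ^ 2) ^ 2
        ≤ (24 / (Real.pi * y)) * ∫ t in Ioi y, φ t / t ^ 2 := by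
  intro y hy
  have hy0 : 0 < y := one_pos.trans_le hy
  have hI : 0 ≤ ∫ t in Ioi y, φ t / t ^ 2 := setIntegral_nonneg measurableSet_Ioi fun t ht =>
    div_nonneg (hnonneg t (hy0.trans ht)) (sq_nonneg t)
  have key := integral_Ioi_zero_mul_deriv_div_le hy0 hderiv hnonneg hmono (hint' y hy0)
    (hint.mono_set (Ioi_subset_Ioi hy))
  calc 4 * y / Real.pi * ∫ t in Ioi (0:ℝ), t * φ' t / (t ^ 2 + y ^ 2) ^ 2
      ≤ 4 * y / Real.pi * (3 * (∫ t in Ioi y, φ t / t ^ 2) / y ^ 2) := by gcongr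
    _ = 12 / (Real.pi * y) * ∫ t in Ioi y, φ t / t ^ 2 := by field_simp; ring
    _ ≤ 24 / (Real.pi * y) * ∫ t in Ioi y, φ t / t ^ 2 := by gcongr; norm_num

theorem stmt7 (φ φ' : ℝ → ℝ)
    (hderiv : ∀ t ∈ Ioi (0:ℝ), HasDerivAt φ (φ' t) t)
    (hcont : ContinuousOn φ' (Ioi 0))
    (hnonneg : ∀ t ∈ Ioi (0:ℝ), 0 ≤ φ t)
    (hmono : MonotoneOn φ (Ioi 0))
    (hint : IntegrableOn (fun t => φ t / t ^ 2) (Ioi 1))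
    (hint' : ∀ y > (0:ℝ), IntegrableOn (fun t => t * φ' t / (t ^ 2 + y ^ 2) ^ 2) (Ioi 0)) :
    ∀ y ≥ (1:ℝ),
      (4 * y / Real.pi) * ∫ t in Ioi (0:ℝ), t * φ' t / (t ^ 2 + y ^ 2) ^ 2
        ≤ (24 / (Real.pi * y)) * ∫ t in Ioi y, φ t / t ^ 2 :=
  stmt7_general φ φ' hderiv hnonneg hmono hint hint'
end

section
/- Let u(x,y) = (y/π)∫_ℝ φ(t)/((t−x)²+y²) dt be the Poisson extension to the upper half-plane of an even, nonnegative, C¹ function φ increasing on (0,∞) with ∫_ℝ φ(t)/(t²+1) dt < ∞. Then for x ≥ 0, ∂u/∂x (x,y) = (4xy/π) ∫₀^∞ t φ'(t) / ([(t−x)²+y²][(t+x)²+y²]) dt ≥ 0; in particular x ↦ u(x,y) is nondecreasing on [0,∞). -/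
/-!
Splitting the integral at `0` and using that `φ` is even,
`u(x, y) = (y/π) ∫₀^∞ φ(t) (P(t - x) + P(t + x)) dt` with `P(s) = 1/(s² + y²)`.
Locally uniformly in `x`, `P(t - x)` and `P'(t - x)` are `O(1/(t² + 1))`, so one may differentiate
under the integral sign. Since `∂ₓ (P(t - x) + P(t + x)) = -∂ₜ (P(t - x) - P(t + x))`, an
integration by parts moves the derivative onto `φ`. The boundary terms vanish: at `0` because
`P` is even, at infinity because a monotone `φ` with `∫ φ/(t² + 1) < ∞` grows at most linearly.
Finally `P(t - x) - P(t + x) = 4tx P(t - x) P(t + x)`, and `φ' ≥ 0` on `(0, ∞)`.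
-/

open Set Filter MeasureTheory Topology

-- The Poisson kernel of the upper half-plane is `y / π * poissonKer y s`.
noncomputable def poissonKer (y s : ℝ) : ℝ := (s ^ 2 + y ^ 2)⁻¹

section poissonKer

variable {y : ℝ}

lemma poissonKer_pos (hy : y ≠ 0) (s : ℝ) : 0 < poissonKer y s := by
  unfold poissonKer; positivity

lemma poissonKer_neg (s : ℝ) : poissonKer y (-s) = poissonKer y s := by
  simp [poissonKer]

lemma continuous_poissonKer (hy : y ≠ 0) : Continuous (poissonKer y) :=
  (continuous_pow 2 |>.add continuous_const).inv₀ fun s => (poissonKer_pos hy s).ne' ∘ inv_eq_zero.2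

lemma hasDerivAt_poissonKer (hy : y ≠ 0) (s : ℝ) :
    HasDerivAt (poissonKer y) (-(2 * s) * poissonKer y s ^ 2) s := by
  have hs : s ^ 2 + y ^ 2 ≠ 0 := by positivity
  have h := ((hasDerivAt_pow 2 s).add_const (y ^ 2)).inv hs
  exact h.congr_deriv (by simp only [poissonKer]; field_simp; ring)

lemma differentiable_poissonKer (hy : y ≠ 0) : Differentiable ℝ (poissonKer y) :=
  fun s => (hasDerivAt_poissonKer hy s).differentiableAt

lemma exists_poissonKer_sub_le (hy : y ≠ 0) (R : ℝ) :
    ∃ C, ∀ x, |x| ≤ R → ∀ t, poissonKer y (t - x) ≤ C / (t ^ 2 + 1) := by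
  refine ⟨2 + (2 * R ^ 2 + 1) / y ^ 2, fun x hx t => ?_⟩
  have hx2 : x ^ 2 ≤ R ^ 2 := sq_le_sq' (neg_le_of_abs_le hx) (le_of_abs_le hx)
  have hy2 : 0 < y ^ 2 := by positivity
  rw [poissonKer, ← one_div, div_le_div_iff₀ (by positivity) (by positivity), one_mul]
  have : (2 * R ^ 2 + 1) / y ^ 2 * ((t - x) ^ 2 + y ^ 2) ≥ 2 * R ^ 2 + 1 := by
    rw [div_mul_eq_mul_div, ge_iff_le, le_div_iff₀ hy2]; nlinarith [sq_nonneg (t - x)]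
  nlinarith [sq_nonneg (t - 2 * x), sq_nonneg (t - x)]

lemma abs_deriv_poissonKer_le (hy : y ≠ 0) (s : ℝ) :
    |deriv (poissonKer y) s| ≤ (1 + (y ^ 2)⁻¹) * poissonKer y s := by
  have hK := poissonKer_pos hy s
  have hy2 : 0 < y ^ 2 := by positivity
  have h2s : 2 * |s| ≤ (1 + (y ^ 2)⁻¹) * (s ^ 2 + y ^ 2) := by
    have : (y ^ 2)⁻¹ * s ^ 2 ≥ 0 := by positivity
    have : (1 + (y ^ 2)⁻¹) * (s ^ 2 + y ^ 2) = s ^ 2 + 1 + y ^ 2 + (y ^ 2)⁻¹ * s ^ 2 := by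
      field_simp; ring
    nlinarith [sq_abs s, sq_nonneg (|s| - 1)]
  rw [(hasDerivAt_poissonKer hy s).deriv, abs_mul, abs_neg, abs_mul, abs_two,
    abs_of_pos (pow_pos hK 2)]
  calc 2 * |s| * poissonKer y s ^ 2
      ≤ (1 + (y ^ 2)⁻¹) * (s ^ 2 + y ^ 2) * poissonKer y s ^ 2 := by gcongr
    _ = (1 + (y ^ 2)⁻¹) * poissonKer y s := by
      rw [poissonKer]; field_simp

lemma poissonKer_sub_sub_add (hy : y ≠ 0) (t x : ℝ) :
    poissonKer y (t - x) - poissonKer y (t + x)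
      = 4 * x * t * (poissonKer y (t - x) * poissonKer y (t + x)) := by
  have h1 : (t - x) ^ 2 + y ^ 2 ≠ 0 := by positivity
  have h2 : (t + x) ^ 2 + y ^ 2 ≠ 0 := by positivity
  simp only [poissonKer]
  field_simp
  ring

end poissonKer

section integral

variable {μ : Measure ℝ} {φ : ℝ → ℝ} {y : ℝ}

lemma norm_mul_le_of_abs_le_div {a b C t : ℝ} (hb : |b| ≤ C / (t ^ 2 + 1)) :
    ‖a * b‖ ≤ C * ‖a / (t ^ 2 + 1)‖ := by
  have ht : 0 < t ^ 2 + 1 := by positivity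
  calc ‖a * b‖ = |a| * |b| := by rw [Real.norm_eq_abs, abs_mul]
    _ ≤ |a| * (C / (t ^ 2 + 1)) := by gcongr
    _ = C * ‖a / (t ^ 2 + 1)‖ := by
      rw [Real.norm_eq_abs, abs_div, abs_of_pos ht]; ring

lemma exists_abs_deriv_poissonKer_sub_le (hy : y ≠ 0) (R : ℝ) :
    ∃ C, ∀ x, |x| ≤ R → ∀ t, |deriv (poissonKer y) (t - x)| ≤ C / (t ^ 2 + 1) := by
  obtain ⟨C, hC⟩ := exists_poissonKer_sub_le hy R
  refine ⟨(1 + (y ^ 2)⁻¹) * C, fun x hx t => ?_⟩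
  rw [mul_div_assoc]
  exact (abs_deriv_poissonKer_le hy _).trans (by gcongr; exact hC x hx t)

lemma integrable_mul_poissonKer_sub (hy : y ≠ 0) (hφ : AEStronglyMeasurable φ μ)
    (hint : Integrable (fun t => φ t / (t ^ 2 + 1)) μ) (x : ℝ) :
    Integrable (fun t => φ t * poissonKer y (t - x)) μ := by
  obtain ⟨C, hC⟩ := exists_poissonKer_sub_le hy |x|
  have hK : Measurable fun t => poissonKer y (t - x) :=
    (continuous_poissonKer hy).measurable.comp (measurable_id.sub_const x)
  refine (hint.norm.const_mul C).mono' (hφ.mul hK.aestronglyMeasurable) (ae_of_all _ fun t => ?_)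
  refine norm_mul_le_of_abs_le_div ?_
  rw [abs_of_pos (poissonKer_pos hy _)]
  exact hC x le_rfl t

lemma integrable_mul_deriv_poissonKer_sub (hy : y ≠ 0) (hφ : AEStronglyMeasurable φ μ)
    (hint : Integrable (fun t => φ t / (t ^ 2 + 1)) μ) (x : ℝ) :
    Integrable (fun t => φ t * deriv (poissonKer y) (t - x)) μ := by
  obtain ⟨C, hC⟩ := exists_abs_deriv_poissonKer_sub_le hy |x|
  have hK' : Measurable fun t => deriv (poissonKer y) (t - x) :=
    (measurable_deriv _).comp (measurable_id.sub_const x)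
  exact (hint.norm.const_mul C).mono' (hφ.mul hK'.aestronglyMeasurable)
    (ae_of_all _ fun t => norm_mul_le_of_abs_le_div (hC x le_rfl t))

lemma hasDerivAt_integral_mul_poissonKer_sub (hy : y ≠ 0) (hφ : AEStronglyMeasurable φ μ)
    (hint : Integrable (fun t => φ t / (t ^ 2 + 1)) μ) (x₀ : ℝ) :
    HasDerivAt (fun x => ∫ t, φ t * poissonKer y (t - x) ∂μ)
      (-∫ t, φ t * deriv (poissonKer y) (t - x₀) ∂μ) x₀ := by
  obtain ⟨C, hC⟩ := exists_abs_deriv_poissonKer_sub_le hy (|x₀| + 1)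
  have hball : ∀ x ∈ Metric.ball x₀ 1, |x| ≤ |x₀| + 1 := fun x hx => by
    have := abs_sub_abs_le_abs_sub x x₀
    rw [Metric.mem_ball, Real.dist_eq] at hx
    linarith
  have h := hasDerivAt_integral_of_dominated_loc_of_deriv_le
    (F' := fun x t => -(φ t * deriv (poissonKer y) (t - x)))
    (bound := fun t => C * ‖φ t / (t ^ 2 + 1)‖) (Metric.ball_mem_nhds x₀ one_pos)
    (Eventually.of_forall fun x => (integrable_mul_poissonKer_sub hy hφ hint x).aestronglyMeasurable)
    (integrable_mul_poissonKer_sub hy hφ hint x₀)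
    (integrable_mul_deriv_poissonKer_sub hy hφ hint x₀).neg.aestronglyMeasurable
    (ae_of_all _ fun t x hx => by
      rw [norm_neg]; exact norm_mul_le_of_abs_le_div (hC x (hball x hx) t))
    (hint.norm.const_mul C)
    (ae_of_all _ fun t x _ =>
      ((((differentiable_poissonKer hy) _).hasDerivAt.comp_const_sub t x).const_mul (φ t)).congr_deriv
        (mul_neg _ _))
  simpa only [integral_neg] using h.2

end integral

lemma integral_eq_integral_Ioi_add_comp_neg {E : Type*} [NormedAddCommGroup E] [NormedSpace ℝ E]
    {f : ℝ → E} (hf : Integrable f) : ∫ t, f t = ∫ t in Ioi 0, (f t + f (-t)) := by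
  rw [integral_add hf.integrableOn hf.comp_neg.integrableOn, integral_comp_neg_Ioi, neg_zero,
    add_comm, intervalIntegral.integral_Iic_add_Ioi hf.integrableOn hf.integrableOn]

section halfLine

variable {φ : ℝ → ℝ} {y : ℝ}

lemma integral_mul_poissonKer_sub_of_even (hy : y ≠ 0) (heven : ∀ t, φ (-t) = φ t)
    (hφ : AEStronglyMeasurable φ) (hint : Integrable fun t => φ t / (t ^ 2 + 1)) (x : ℝ) :
    ∫ t, φ t * poissonKer y (t - x)
      = (∫ t in Ioi 0, φ t * poissonKer y (t - x)) + ∫ t in Ioi 0, φ t * poissonKer y (t + x) := by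
  have hplus : Integrable fun t => φ t * poissonKer y (t + x) := by
    simpa only [sub_neg_eq_add] using integrable_mul_poissonKer_sub hy hφ hint (-x)
  rw [integral_eq_integral_Ioi_add_comp_neg (integrable_mul_poissonKer_sub hy hφ hint x),
    ← integral_add (integrable_mul_poissonKer_sub hy hφ hint x).integrableOn hplus.integrableOn]
  congr 1 with t
  rw [heven, ← poissonKer_neg (t + x), neg_add', neg_sub_comm]

lemma exists_le_mul_of_monotoneOn (hnonneg : ∀ t, 0 ≤ φ t) (hmono : MonotoneOn φ (Ioi 0))
    (hint : Integrable fun t => φ t / (t ^ 2 + 1)) : ∃ c, ∀ t ≥ 1, φ t ≤ c * t := by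
  set I := ∫ s, φ s / (s ^ 2 + 1)
  have hf_nonneg : ∀ s, 0 ≤ φ s / (s ^ 2 + 1) := fun s => div_nonneg (hnonneg s) (by positivity)
  refine ⟨5 * I, fun t ht => ?_⟩
  have ht0 : 0 < t := one_pos.trans_le ht
  have hlower : t * (φ t / (4 * t ^ 2 + 1)) ≤ I := by
    calc t * (φ t / (4 * t ^ 2 + 1)) = ∫ _ in Ioc t (2 * t), φ t / (4 * t ^ 2 + 1) := by
          rw [setIntegral_const, Real.volume_real_Ioc, smul_eq_mul, max_eq_left (by linarith)]
          ring
      _ ≤ ∫ s in Ioc t (2 * t), φ s / (s ^ 2 + 1) := by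
          refine setIntegral_mono_on (integrableOn_const measure_Ioc_lt_top.ne) hint.integrableOn
            measurableSet_Ioc fun s ⟨hts, hs2t⟩ => ?_
          have hφ : φ t ≤ φ s := hmono ht0 (ht0.trans hts) hts.le
          have hs : s ^ 2 + 1 ≤ 4 * t ^ 2 + 1 := by nlinarith
          calc φ t / (4 * t ^ 2 + 1) ≤ φ t / (s ^ 2 + 1) := by gcongr; exact hnonneg t
            _ ≤ φ s / (s ^ 2 + 1) := by gcongr
      _ ≤ I := setIntegral_le_integral hint (ae_of_all _ hf_nonneg)
  have hI : 0 ≤ I := integral_nonneg hf_nonneg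
  rw [mul_div_assoc', div_le_iff₀ (by positivity)] at hlower
  refine le_of_mul_le_mul_left ?_ ht0
  nlinarith [mul_nonneg hI (sub_nonneg.2 (one_le_pow₀ ht : 1 ≤ t ^ 2))]

lemma tendsto_mul_poissonKer_sub_sub_add_atTop (hy : y ≠ 0) (hnonneg : ∀ t, 0 ≤ φ t)
    (hmono : MonotoneOn φ (Ioi 0)) (hint : Integrable fun t => φ t / (t ^ 2 + 1)) (x : ℝ) :
    Tendsto (fun t => φ t * (poissonKer y (t - x) - poissonKer y (t + x))) atTop (𝓝 0) := by
  obtain ⟨c, hc⟩ := exists_le_mul_of_monotoneOn hnonneg hmono hint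
  obtain ⟨C, hC⟩ := exists_poissonKer_sub_le hy |x|
  have hc0 : 0 ≤ c := by simpa using (hnonneg 1).trans (hc 1 le_rfl)
  have hlim : Tendsto (fun t : ℝ => 4 * |x| * c * C ^ 2 / (t ^ 2 + 1)) atTop (𝓝 0) :=
    tendsto_const_nhds.div_atTop
      (tendsto_atTop_add_const_right _ 1 (tendsto_pow_atTop two_ne_zero))
  refine squeeze_zero_norm' ?_ hlim
  filter_upwards [eventually_ge_atTop 1] with t ht
  have ht0 : 0 < t := one_pos.trans_le ht
  have hminus := hC x le_rfl t
  have hplus : poissonKer y (t + x) ≤ C / (t ^ 2 + 1) := by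
    simpa only [sub_neg_eq_add] using hC (-x) (abs_neg x).le t
  have htφ : t * φ t ≤ c * (t ^ 2 + 1) := by nlinarith [hc t ht]
  have hKK : poissonKer y (t - x) * poissonKer y (t + x) ≤ C / (t ^ 2 + 1) * (C / (t ^ 2 + 1)) :=
    mul_le_mul hminus hplus (poissonKer_pos hy _).le ((poissonKer_pos hy _).le.trans hminus)
  calc ‖φ t * (poissonKer y (t - x) - poissonKer y (t + x))‖
      = 4 * |x| * (t * φ t) * (poissonKer y (t - x) * poissonKer y (t + x)) := by
        rw [poissonKer_sub_sub_add hy, Real.norm_eq_abs, abs_mul, abs_mul, abs_mul, abs_mul,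
          abs_of_nonneg (hnonneg t), abs_of_pos ht0,
          abs_of_pos (mul_pos (poissonKer_pos hy _) (poissonKer_pos hy _))]
        norm_num; ring
    _ ≤ 4 * |x| * (c * (t ^ 2 + 1)) * (C / (t ^ 2 + 1) * (C / (t ^ 2 + 1))) := by
        gcongr
        exact (mul_pos (poissonKer_pos hy _) (poissonKer_pos hy _)).le
    _ = 4 * |x| * c * C ^ 2 / (t ^ 2 + 1) := by
        field_simp

end halfLine

lemma integral_Ioi_mul_deriv_poissonKer_sub_sub_add {φ φ' : ℝ → ℝ} {y : ℝ} (hy : y ≠ 0)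
    (hderiv : ∀ t, HasDerivAt φ (φ' t) t) (hnonneg : ∀ t, 0 ≤ φ t)
    (hmono : MonotoneOn φ (Ioi 0)) (hint : Integrable fun t => φ t / (t ^ 2 + 1)) (x : ℝ)
    (hint' : IntegrableOn (fun t => φ' t * (poissonKer y (t - x) - poissonKer y (t + x))) (Ioi 0)) :
    ∫ t in Ioi 0, φ t * (deriv (poissonKer y) (t - x) - deriv (poissonKer y) (t + x))
      = -∫ t in Ioi 0, φ' t * (poissonKer y (t - x) - poissonKer y (t + x)) := by
  have hφ : Continuous φ := continuous_iff_continuousAt.2 fun t => (hderiv t).continuousAt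
  set v := fun t => poissonKer y (t - x) - poissonKer y (t + x)
  have hv : ∀ t, HasDerivAt v (deriv (poissonKer y) (t - x) - deriv (poissonKer y) (t + x)) t :=
    fun t => ((differentiable_poissonKer hy _).hasDerivAt.comp_sub_const t x).sub
      ((differentiable_poissonKer hy _).hasDerivAt.comp_add_const t x)
  have hplus := integrable_mul_deriv_poissonKer_sub hy hφ.aestronglyMeasurable
    (hint.integrableOn (s := Ioi 0)) (-x)
  simp only [sub_neg_eq_add] at hplus
  have hφv' : IntegrableOn (fun t => φ t * (deriv (poissonKer y) (t - x)
      - deriv (poissonKer y) (t + x))) (Ioi 0) :=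
    ((integrable_mul_deriv_poissonKer_sub hy hφ.aestronglyMeasurable
      (hint.integrableOn (s := Ioi 0)) x).sub hplus).congr
      (ae_of_all _ fun t => (mul_sub _ _ _).symm)
  have hzero : Tendsto (fun t => φ t * v t) (𝓝[>] 0) (𝓝 0) := by
    have hcont : Continuous fun t => φ t * v t :=
      hφ.mul (continuous_iff_continuousAt.2 fun t => (hv t).continuousAt)
    simpa [v, poissonKer_neg] using (hcont.tendsto 0).mono_left nhdsWithin_le_nhds
  rw [integral_Ioi_mul_deriv_eq_deriv_mul (fun t _ => hderiv t) (fun t _ => hv t) hφv' hint'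
    hzero (tendsto_mul_poissonKer_sub_sub_add_atTop hy hnonneg hmono hint x)]
  ring

lemma hasDerivAt_integral_Ioi_mul_poissonKer_symm {φ φ' : ℝ → ℝ} {y : ℝ} (hy : y ≠ 0)
    (hderiv : ∀ t, HasDerivAt φ (φ' t) t) (hnonneg : ∀ t, 0 ≤ φ t)
    (hmono : MonotoneOn φ (Ioi 0)) (hint : Integrable fun t => φ t / (t ^ 2 + 1)) (x : ℝ)
    (hint' : IntegrableOn
      (fun t => t * φ' t / (((t - x) ^ 2 + y ^ 2) * ((t + x) ^ 2 + y ^ 2))) (Ioi 0)) :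
    HasDerivAt
      (fun x => (∫ t in Ioi 0, φ t * poissonKer y (t - x)) + ∫ t in Ioi 0, φ t * poissonKer y (t + x))
      (4 * x * ∫ t in Ioi 0, t * φ' t / (((t - x) ^ 2 + y ^ 2) * ((t + x) ^ 2 + y ^ 2))) x := by
  have hφ : AEStronglyMeasurable φ (volume.restrict (Ioi 0)) :=
    (continuous_iff_continuousAt.2 fun t => (hderiv t).continuousAt).aestronglyMeasurable
  have hG := hasDerivAt_integral_mul_poissonKer_sub hy hφ (hint.integrableOn (s := Ioi 0))
  have hGneg : HasDerivAt (fun x => ∫ t in Ioi 0, φ t * poissonKer y (t + x))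
      (∫ t in Ioi 0, φ t * deriv (poissonKer y) (t + x)) x := by
    simpa [Function.comp_def] using (hG (-x)).comp x (hasDerivAt_neg x)
  have hφ'v : ∀ t, φ' t * (poissonKer y (t - x) - poissonKer y (t + x))
      = 4 * x * (t * φ' t / (((t - x) ^ 2 + y ^ 2) * ((t + x) ^ 2 + y ^ 2))) := fun t => by
    have h1 : (t - x) ^ 2 + y ^ 2 ≠ 0 := by positivity
    have h2 : (t + x) ^ 2 + y ^ 2 ≠ 0 := by positivity
    simp only [poissonKer]
    field_simp
    ring
  have hparts := integral_Ioi_mul_deriv_poissonKer_sub_sub_add hy hderiv hnonneg hmono hint x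
    (IntegrableOn.congr_fun (hint'.const_mul (4 * x)) (fun t _ => (hφ'v t).symm) measurableSet_Ioi)
  have hminus := integrable_mul_deriv_poissonKer_sub hy hφ (hint.integrableOn (s := Ioi 0)) x
  have hplus := integrable_mul_deriv_poissonKer_sub hy hφ (hint.integrableOn (s := Ioi 0)) (-x)
  simp only [sub_neg_eq_add] at hplus
  refine ((hG x).add hGneg).congr_deriv ?_
  calc -(∫ t in Ioi 0, φ t * deriv (poissonKer y) (t - x))
        + ∫ t in Ioi 0, φ t * deriv (poissonKer y) (t + x)
      = -∫ t in Ioi 0, φ t * (deriv (poissonKer y) (t - x) - deriv (poissonKer y) (t + x)) := by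
        rw [neg_add_eq_sub, ← integral_sub hplus hminus, ← integral_neg]
        congr 1 with t
        ring
    _ = _ := by simp only [hparts, neg_neg, hφ'v, integral_const_mul]

theorem stmt8_general (φ φ' : ℝ → ℝ)
    (heven : ∀ t : ℝ, φ (-t) = φ t)
    (hderiv : ∀ t : ℝ, HasDerivAt φ (φ' t) t)
    (hnonneg : ∀ t : ℝ, 0 ≤ φ t)
    (hmono : MonotoneOn φ (Ioi 0))
    (hint : Integrable (fun t => φ t / (t ^ 2 + 1)))
    (hint' : ∀ x ≥ (0:ℝ), ∀ y > (0:ℝ),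
      IntegrableOn
        (fun t => t * φ' t / (((t - x) ^ 2 + y ^ 2) * ((t + x) ^ 2 + y ^ 2))) (Ioi 0))
    (u : ℝ → ℝ → ℝ)
    (hu : ∀ x : ℝ, ∀ y > (0:ℝ),
      u x y = (y / Real.pi) * ∫ t : ℝ, φ t / ((t - x) ^ 2 + y ^ 2)) :
    ∀ y > (0:ℝ),
      (∀ x ≥ (0:ℝ),
        HasDerivAt (fun x' => u x' y)
          ((4 * x * y / Real.pi) * ∫ t in Ioi (0:ℝ),
            t * φ' t / (((t - x) ^ 2 + y ^ 2) * ((t + x) ^ 2 + y ^ 2))) x ∧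
        0 ≤ (4 * x * y / Real.pi) * ∫ t in Ioi (0:ℝ),
            t * φ' t / (((t - x) ^ 2 + y ^ 2) * ((t + x) ^ 2 + y ^ 2))) ∧
      MonotoneOn (fun x => u x y) (Ici 0) := by
  intro y hy
  have hφ : Continuous φ := continuous_iff_continuousAt.2 fun t => (hderiv t).continuousAt
  have hu_split : (fun x => u x y) = fun x => y / Real.pi *
      ((∫ t in Ioi 0, φ t * poissonKer y (t - x)) + ∫ t in Ioi 0, φ t * poissonKer y (t + x)) := by
    ext x
    rw [hu x y hy, ← integral_mul_poissonKer_sub_of_even hy.ne' heven hφ.aestronglyMeasurable hint]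
    simp only [poissonKer, div_eq_mul_inv]
  have hφ'_nonneg : ∀ t ∈ Ioi (0:ℝ), 0 ≤ φ' t := fun t ht =>
    (hderiv t).hasDerivWithinAt.nonneg_of_monotoneOn (isOpen_Ioi.preperfect t ht) hmono
  set D := fun x => (4 * x * y / Real.pi) *
    ∫ t in Ioi 0, t * φ' t / (((t - x) ^ 2 + y ^ 2) * ((t + x) ^ 2 + y ^ 2))
  have hdu : ∀ x ≥ (0:ℝ), HasDerivAt (fun x' => u x' y) (D x) x := fun x hx => by
    rw [hu_split]
    refine ((hasDerivAt_integral_Ioi_mul_poissonKer_symm hy.ne' hderiv hnonneg hmono hint x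
      (hint' x hx y hy)).const_mul (y / Real.pi)).congr_deriv ?_
    ring
  have hdu_nonneg : ∀ x ≥ (0:ℝ), 0 ≤ D x := fun x hx =>
    mul_nonneg (by positivity) (setIntegral_nonneg measurableSet_Ioi fun t ht =>
      div_nonneg (mul_nonneg ht.le (hφ'_nonneg t ht)) (by positivity))
  refine ⟨fun x hx => ⟨hdu x hx, hdu_nonneg x hx⟩, ?_⟩
  refine monotoneOn_of_hasDerivWithinAt_nonneg (f' := D) (convex_Ici 0)
    (fun x hx => (hdu x hx).continuousAt.continuousWithinAt) ?_ ?_ <;>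
    simp only [interior_Ici]
  · exact fun x hx => (hdu x hx.le).hasDerivWithinAt
  · exact fun x hx => hdu_nonneg x hx.le

theorem stmt8 (φ φ' : ℝ → ℝ)
    (heven : ∀ t : ℝ, φ (-t) = φ t)
    (hderiv : ∀ t : ℝ, HasDerivAt φ (φ' t) t)
    (hcont : Continuous φ')
    (hnonneg : ∀ t : ℝ, 0 ≤ φ t)
    (hmono : MonotoneOn φ (Ioi 0))
    (hint : Integrable (fun t => φ t / (t ^ 2 + 1)))
    (hint' : ∀ x ≥ (0:ℝ), ∀ y > (0:ℝ),
      IntegrableOn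
        (fun t => t * φ' t / (((t - x) ^ 2 + y ^ 2) * ((t + x) ^ 2 + y ^ 2))) (Ioi 0))
    (u : ℝ → ℝ → ℝ)
    (hu : ∀ x : ℝ, ∀ y > (0:ℝ),
      u x y = (y / Real.pi) * ∫ t : ℝ, φ t / ((t - x) ^ 2 + y ^ 2)) :
    ∀ y > (0:ℝ),
      (∀ x ≥ (0:ℝ),
        HasDerivAt (fun x' => u x' y)
          ((4 * x * y / Real.pi) * ∫ t in Ioi (0:ℝ),
            t * φ' t / (((t - x) ^ 2 + y ^ 2) * ((t + x) ^ 2 + y ^ 2))) x ∧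
        0 ≤ (4 * x * y / Real.pi) * ∫ t in Ioi (0:ℝ),
            t * φ' t / (((t - x) ^ 2 + y ^ 2) * ((t + x) ^ 2 + y ^ 2))) ∧
      MonotoneOn (fun x => u x y) (Ici 0) :=
  stmt8_general φ φ' heven hderiv hnonneg hmono hint hint' u hu
end

section
/- With u the Poisson integral of φ as above and q(y) = u(0,y), for all 0 ≤ x ≤ y one has u'_x(x,y) ≥ (x/6)|q''(y)|, where q''(y) = −(4y/π)∫₀^∞ tφ'(t)/(t²+y²)² dt. -/
open Set Filter MeasureTheory Topology

theorem stmt9 (φ φ' : ℝ → ℝ)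
    (heven : ∀ t : ℝ, φ (-t) = φ t)
    (hderiv : ∀ t : ℝ, HasDerivAt φ (φ' t) t)
    (hcont : Continuous φ')
    (hnonneg : ∀ t : ℝ, 0 ≤ φ t)
    (hmono : MonotoneOn φ (Ioi 0))
    (hint : Integrable (fun t => φ t / (t ^ 2 + 1)))
    (hint1 : ∀ x ≥ (0:ℝ), ∀ y > (0:ℝ),
      IntegrableOn
        (fun t => t * φ' t / (((t - x) ^ 2 + y ^ 2) * ((t + x) ^ 2 + y ^ 2))) (Ioi 0))
    (hint2 : ∀ y > (0:ℝ), IntegrableOn (fun t => t * φ' t / (t ^ 2 + y ^ 2) ^ 2) (Ioi 0)) :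
    ∀ y > (0:ℝ), ∀ x, 0 ≤ x → x ≤ y →
      (4 * x * y / Real.pi) * (∫ t in Ioi (0:ℝ),
          t * φ' t / (((t - x) ^ 2 + y ^ 2) * ((t + x) ^ 2 + y ^ 2)))
        ≥ (x / 6) * |-(4 * y / Real.pi) * ∫ t in Ioi (0:ℝ), t * φ' t / (t ^ 2 + y ^ 2) ^ 2| := by
  have hπ : 0 < Real.pi := Real.pi_pos
  have hφ' : ∀ t : ℝ, 0 < t → 0 ≤ φ' t := by
    intro t ht
    have h1 : Tendsto (slope φ t) (𝓝[>] t) (𝓝 (φ' t)) :=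
      (hasDerivAt_iff_tendsto_slope.mp (hderiv t)).mono_left
        (nhdsWithin_mono t (fun u hu => ne_of_gt hu))
    refine ge_of_tendsto h1 ?_
    filter_upwards [self_mem_nhdsWithin] with u hu
    have h2 : φ t ≤ φ u := hmono ht (lt_trans ht hu) (le_of_lt hu)
    rw [slope_def_field]
    exact div_nonneg (by linarith) (sub_nonneg.2 (le_of_lt hu))
  intro y hy x hx hxy
  set I₁ := ∫ t in Ioi (0:ℝ),
      t * φ' t / (((t - x) ^ 2 + y ^ 2) * ((t + x) ^ 2 + y ^ 2)) with hI₁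
  set I₂ := ∫ t in Ioi (0:ℝ), t * φ' t / (t ^ 2 + y ^ 2) ^ 2 with hI₂
  have hI₂nonneg : 0 ≤ I₂ := by
    refine setIntegral_nonneg measurableSet_Ioi fun t ht => ?_
    exact div_nonneg (mul_nonneg (le_of_lt ht) (hφ' t ht)) (by positivity)
  have key : (1/6 : ℝ) * I₂ ≤ I₁ := by
    rw [hI₂, ← integral_const_mul]
    refine setIntegral_mono_on ((hint2 y hy).const_mul _) (hint1 x hx y hy)
      measurableSet_Ioi fun t ht => ?_
    simp only [mem_Ioi] at ht
    have hA : (t - x) ^ 2 + y ^ 2 ≤ 2 * (t ^ 2 + y ^ 2) := by nlinarith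
    have hB : (t + x) ^ 2 + y ^ 2 ≤ 3 * (t ^ 2 + y ^ 2) := by nlinarith
    have hABpos : 0 < ((t - x) ^ 2 + y ^ 2) * ((t + x) ^ 2 + y ^ 2) := by positivity
    have hAB : ((t - x) ^ 2 + y ^ 2) * ((t + x) ^ 2 + y ^ 2) ≤ 6 * (t ^ 2 + y ^ 2) ^ 2 := by
      nlinarith [sq_nonneg (t - x), sq_nonneg (t + x), sq_nonneg y, sq_nonneg t]
    have hnum : 0 ≤ t * φ' t := mul_nonneg (le_of_lt ht) (hφ' t ht)
    calc (1/6 : ℝ) * (t * φ' t / (t ^ 2 + y ^ 2) ^ 2)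
        = t * φ' t / (6 * (t ^ 2 + y ^ 2) ^ 2) := by
          rw [eq_div_iff (by positivity)]
          field_simp
      _ ≤ t * φ' t / (((t - x) ^ 2 + y ^ 2) * ((t + x) ^ 2 + y ^ 2)) :=
          div_le_div_of_nonneg_left hnum hABpos hAB
  have habs : |-(4 * y / Real.pi) * I₂| = (4 * y / Real.pi) * I₂ := by
    rw [neg_mul, abs_neg, abs_of_nonneg (by positivity)]
  rw [habs, ge_iff_le]
  have h6 : 4 * x * y / Real.pi * ((1/6 : ℝ) * I₂) = x / 6 * (4 * y / Real.pi * I₂) := by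
    field_simp
  calc x / 6 * (4 * y / Real.pi * I₂) = 4 * x * y / Real.pi * ((1/6 : ℝ) * I₂) := h6.symm
    _ ≤ 4 * x * y / Real.pi * I₁ := mul_le_mul_of_nonneg_left key (by positivity)
end

section
/- With u and φ as above, for x ≥ y > 0 one has u'_x(x,y) ≥ (2/(5π)) · min_{t ∈ [x/2, 3x/2]} φ'(t). -/
open Set Filter MeasureTheory Topology

lemma slope_nonneg_aux {φ φ' : ℝ → ℝ} (hderiv : ∀ t : ℝ, HasDerivAt φ (φ' t) t)
    (hmono : MonotoneOn φ (Ioi 0)) {t : ℝ} (ht : 0 < t) : 0 ≤ φ' t := by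
  have h1 : Tendsto (slope φ t) (𝓝[≠] t) (𝓝 (φ' t)) :=
    hasDerivAt_iff_tendsto_slope.1 (hderiv t)
  have h2 : Tendsto (slope φ t) (𝓝[>] t) (𝓝 (φ' t)) :=
    h1.mono_left (nhdsWithin_mono _ (fun s hs => ne_of_gt hs))
  refine ge_of_tendsto h2 ?_
  filter_upwards [self_mem_nhdsWithin] with s hs
  have hst : t < s := hs
  have : φ t ≤ φ s := hmono ht (ht.trans hst) hst.le
  rw [slope_def_field]
  exact div_nonneg (by linarith) (by linarith)

theorem stmt10 (φ φ' : ℝ → ℝ)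
    (heven : ∀ t : ℝ, φ (-t) = φ t)
    (hderiv : ∀ t : ℝ, HasDerivAt φ (φ' t) t)
    (hcont : Continuous φ')
    (hnonneg : ∀ t : ℝ, 0 ≤ φ t)
    (hmono : MonotoneOn φ (Ioi 0))
    (hint : Integrable (fun t => φ t / (t ^ 2 + 1)))
    (hint1 : ∀ x ≥ (0:ℝ), ∀ y > (0:ℝ),
      IntegrableOn
        (fun t => t * φ' t / (((t - x) ^ 2 + y ^ 2) * ((t + x) ^ 2 + y ^ 2))) (Ioi 0)) :
    ∀ x y : ℝ, 0 < y → y ≤ x →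
      (4 * x * y / Real.pi) * (∫ t in Ioi (0:ℝ),
          t * φ' t / (((t - x) ^ 2 + y ^ 2) * ((t + x) ^ 2 + y ^ 2)))
        ≥ (2 / (5 * Real.pi)) * sInf (φ' '' Icc (x / 2) (3 * x / 2)) := by
  intro x y hy hyx
  have hx : 0 < x := hy.trans_le hyx
  have hpi : 0 < Real.pi := Real.pi_pos
  set f : ℝ → ℝ := fun t => t * φ' t / (((t - x) ^ 2 + y ^ 2) * ((t + x) ^ 2 + y ^ 2)) with hf
  set m : ℝ := sInf (φ' '' Icc (x / 2) (3 * x / 2)) with hm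
  -- basic facts about m
  have hIccne : (Icc (x / 2) (3 * x / 2)).Nonempty := nonempty_Icc.2 (by linarith)
  have hbdd : BddBelow (φ' '' Icc (x / 2) (3 * x / 2)) :=
    ((isCompact_Icc.image hcont)).bddBelow
  have hmle : ∀ s ∈ Icc (x / 2) (3 * x / 2), m ≤ φ' s := fun s hs =>
    csInf_le hbdd (mem_image_of_mem _ hs)
  have hm0 : 0 ≤ m := by
    refine le_csInf (hIccne.image _) ?_
    rintro b ⟨s, hs, rfl⟩
    exact slope_nonneg_aux hderiv hmono (by have := hs.1; linarith)
  -- the subinterval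
  set a : ℝ := x - y / 2 with ha
  set b : ℝ := x + y / 2 with hb
  have hab : a ≤ b := by simp only [ha, hb]; linarith
  have hsub : Icc a b ⊆ Ioi 0 := fun t ht => by
    simp only [mem_Ioi]; have := ht.1; simp only [ha] at this; linarith
  set K : ℝ := (5 * y ^ 2 / 4) * (15 * x ^ 2 / 2) with hK
  have hK0 : 0 < K := by positivity
  set g : ℝ → ℝ := fun t => (m / K) * t with hg
  -- f nonneg on Ioi 0
  have hfnn : ∀ t ∈ Ioi (0:ℝ), 0 ≤ f t := by
    intro t ht
    have ht0 : 0 < t := ht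
    have h1 : 0 ≤ φ' t := slope_nonneg_aux hderiv hmono ht0
    have h2 : 0 < ((t - x) ^ 2 + y ^ 2) * ((t + x) ^ 2 + y ^ 2) := by positivity
    exact div_nonneg (mul_nonneg ht0.le h1) h2.le
  -- pointwise bound g ≤ f on Icc a b
  have hgf : ∀ t ∈ Icc a b, g t ≤ f t := by
    intro t ht
    have ht1 : a ≤ t := ht.1
    have ht2 : t ≤ b := ht.2
    have ht0 : 0 < t := hsub ht
    have hmem : t ∈ Icc (x / 2) (3 * x / 2) :=
      ⟨by simp only [ha] at ht1; linarith, by simp only [hb] at ht2; linarith⟩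
    have hφ : m ≤ φ' t := hmle t hmem
    have hD0 : 0 < ((t - x) ^ 2 + y ^ 2) * ((t + x) ^ 2 + y ^ 2) := by positivity
    have hDK : ((t - x) ^ 2 + y ^ 2) * ((t + x) ^ 2 + y ^ 2) ≤ K := by
      have h1 : (t - x) ^ 2 + y ^ 2 ≤ 5 * y ^ 2 / 4 := by
        have : (t - x) ^ 2 ≤ (y / 2) ^ 2 := by
          have h' : |t - x| ≤ y / 2 := abs_le.2 ⟨by simp only [ha] at ht1; linarith,
            by simp only [hb] at ht2; linarith⟩
          calc (t - x) ^ 2 = |t - x| ^ 2 := (sq_abs _).symm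
            _ ≤ (y / 2) ^ 2 := by nlinarith [abs_nonneg (t - x)]
        nlinarith
      have h2 : (t + x) ^ 2 + y ^ 2 ≤ 15 * x ^ 2 / 2 := by
        have htx : t + x ≤ 5 * x / 2 := by simp only [hb] at ht2; linarith
        have htx0 : 0 < t + x := by linarith
        nlinarith
      have hp1 : (0:ℝ) ≤ (t - x) ^ 2 + y ^ 2 := by positivity
      have hp2 : (0:ℝ) ≤ (t + x) ^ 2 + y ^ 2 := by positivity
      calc ((t - x) ^ 2 + y ^ 2) * ((t + x) ^ 2 + y ^ 2)
          ≤ (5 * y ^ 2 / 4) * (15 * x ^ 2 / 2) := by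
            apply mul_le_mul h1 h2 hp2 (by positivity)
        _ = K := rfl
    have : (m / K) * t = m * t / K := by ring
    rw [hg]
    simp only [hf, this]
    exact div_le_div₀ (mul_nonneg ht0.le (hm0.trans hφ))
      (by nlinarith) hD0 hDK
  -- integral comparisons
  have hfint : IntegrableOn f (Ioi 0) := hint1 x hx.le y hy
  have hfintIcc : IntegrableOn f (Icc a b) := hfint.mono_set hsub
  have hgint : IntegrableOn g (Icc a b) :=
    ((continuous_const.mul continuous_id).integrableOn_Icc)
  have step1 : ∫ t in Icc a b, g t ≤ ∫ t in Icc a b, f t :=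
    setIntegral_mono_on hgint hfintIcc measurableSet_Icc hgf
  have step2 : ∫ t in Icc a b, f t ≤ ∫ t in Ioi (0:ℝ), f t := by
    apply setIntegral_mono_set hfint
    · exact (ae_restrict_iff' measurableSet_Ioi).2 (ae_of_all _ hfnn)
    · exact HasSubset.Subset.eventuallyLE hsub
  have hgval : ∫ t in Icc a b, g t = m / K * (x * y) := by
    rw [MeasureTheory.integral_Icc_eq_integral_Ioc,
      ← intervalIntegral.integral_of_le hab]
    simp only [hg]
    rw [intervalIntegral.integral_const_mul, integral_id]
    simp only [ha, hb]
    ring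
  have hI : m / K * (x * y) ≤ ∫ t in Ioi (0:ℝ), f t := by
    rw [← hgval]; exact step1.trans step2
  have key : (2 / (5 * Real.pi)) * m ≤ (4 * x * y / Real.pi) * (m / K * (x * y)) := by
    have : (4 * x * y / Real.pi) * (m / K * (x * y)) = 32 * m / (75 * Real.pi) := by
      rw [hK]; field_simp; ring
    rw [this]
    rw [div_mul_eq_mul_div, div_le_div_iff₀ (by positivity) (by positivity)]
    nlinarith
  calc (2 / (5 * Real.pi)) * m ≤ (4 * x * y / Real.pi) * (m / K * (x * y)) := key
    _ ≤ (4 * x * y / Real.pi) * (∫ t in Ioi (0:ℝ), f t) := by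
        apply mul_le_mul_of_nonneg_left hI (by positivity)
end

section
/- Let φ: (0,∞) → (0,∞) be C¹ with φ'(t)/t nonincreasing, and suppose φ(t)/(log t)³ is increasing to +∞. Then t³ ∫_t^∞ φ(ξ)/ξ⁴ dξ ≤ (1/3)(φ(t) + tφ'(t)), and moreover tφ'(t)/φ(t)^{2/3} ≥ 3 φ(t)^{1/3}/log t → ∞, hence lim_{t→∞} tφ'(t) / (t³∫_t^∞ φ(ξ)/ξ⁴ dξ)^{2/3} = +∞. -/
open Set Filter MeasureTheory Topology Real

/-!
Since `φ'(s) / s` is nonincreasing, `φ` lies below the parabola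
`φ(t) + (φ'(t) / t) (ξ² - t²) / 2` on `[t, ∞)`, and integrating that parabola against `ξ⁻⁴` gives
the first inequality. Monotonicity of `φ / log³` makes its derivative nonnegative, which is
`t φ'(t) ≥ 3 φ(t) / log t`. Together they give `t³ ∫_t^∞ φ(ξ) ξ⁻⁴ dξ ≤ t φ'(t) log t` and
`φ(t) / log³ t ≤ t φ'(t) / log² t`, hence
`(φ(t) / log³ t)^{1/3} (t³ ∫_t^∞ φ(ξ) ξ⁻⁴ dξ)^{2/3} ≤ t φ'(t)`, whose left factor tends to `∞`.
-/

lemma le_add_mul_sq_sub_sq_of_antitoneOn_deriv_div_self {f f' : ℝ → ℝ} {t ξ : ℝ}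
    (hf : ∀ s ∈ Ici t, HasDerivAt f (f' s) s)
    (hanti : AntitoneOn (fun s => f' s / s) (Ici t)) (ht : 0 < t) (hξ : t ≤ ξ) :
    f ξ ≤ f t + f' t / t * (ξ ^ 2 - t ^ 2) / 2 := by
  set g := fun s => f t + f' t / t * (s ^ 2 - t ^ 2) / 2 - f s
  have hg (s : ℝ) (hs : s ∈ Ici t) : HasDerivAt g (f' t / t * s - f' s) s :=
    ((((((hasDerivAt_pow 2 s).sub_const (t ^ 2)).const_mul (f' t / t)).div_const 2).const_add
      (f t)).sub (hf s hs)).congr_deriv (by norm_num; ring)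
  have hmono : MonotoneOn g (Ici t) := by
    refine monotoneOn_of_hasDerivWithinAt_nonneg (convex_Ici t)
      (fun s hs => (hg s hs).continuousAt.continuousWithinAt)
      (fun s hs => (hg s (interior_subset hs)).hasDerivWithinAt) fun s hs => ?_
    rw [interior_Ici] at hs
    have hs0 : 0 < s := ht.trans hs
    have : f' s / s ≤ f' t / t := hanti self_mem_Ici (Ioi_subset_Ici_self hs) (le_of_lt hs)
    rw [div_le_iff₀ hs0] at this
    linarith
  have := hmono self_mem_Ici hξ hξ
  simp only [g, sub_self, mul_zero, zero_div, add_zero] at this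
  linarith

lemma cube_mul_setIntegral_Ioi_div_pow_four_le {f : ℝ → ℝ} {t A B : ℝ} (ht : 0 < t)
    (hint : IntegrableOn (fun ξ => f ξ / ξ ^ 4) (Ioi t))
    (hle : ∀ ξ ∈ Ioi t, f ξ ≤ A + B * ξ ^ 2) :
    t ^ 3 * ∫ ξ in Ioi t, f ξ / ξ ^ 4 ≤ A / 3 + B * t ^ 2 := by
  have hrpow {ξ : ℝ} (hξ : 0 < ξ) (n : ℕ) : ξ ^ (-(n : ℝ)) = (ξ ^ n)⁻¹ := by
    rw [rpow_neg hξ.le, rpow_natCast]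
  have h4 := integrableOn_Ioi_rpow_of_lt (by norm_num : (-4 : ℝ) < -1) ht
  have h2 := integrableOn_Ioi_rpow_of_lt (by norm_num : (-2 : ℝ) < -1) ht
  have hmaj : ∀ ξ ∈ Ioi t, f ξ / ξ ^ 4 ≤ A * ξ ^ (-4 : ℝ) + B * ξ ^ (-2 : ℝ) := by
    intro ξ hξ
    have hξ0 : 0 < ξ := ht.trans hξ
    calc f ξ / ξ ^ 4 ≤ (A + B * ξ ^ 2) / ξ ^ 4 := by gcongr; exact hle ξ hξ
      _ = _ := by
        rw [show (-4 : ℝ) = -(4 : ℕ) by norm_num, show (-2 : ℝ) = -(2 : ℕ) by norm_num,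
          hrpow hξ0, hrpow hξ0]
        field_simp
  have hint_maj : ∫ ξ in Ioi t, A * ξ ^ (-4 : ℝ) + B * ξ ^ (-2 : ℝ)
      = A * (t ^ (-3 : ℝ) / 3) + B * t ^ (-1 : ℝ) := by
    rw [integral_add (h4.const_mul A) (h2.const_mul B), integral_const_mul, integral_const_mul,
      integral_Ioi_rpow_of_lt (by norm_num) ht, integral_Ioi_rpow_of_lt (by norm_num) ht]
    norm_num
  calc t ^ 3 * ∫ ξ in Ioi t, f ξ / ξ ^ 4
      ≤ t ^ 3 * ∫ ξ in Ioi t, A * ξ ^ (-4 : ℝ) + B * ξ ^ (-2 : ℝ) :=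
        mul_le_mul_of_nonneg_left (setIntegral_mono_on hint
          ((h4.const_mul A).add (h2.const_mul B)) measurableSet_Ioi hmaj) (by positivity)
    _ = A / 3 + B * t ^ 2 := by
        rw [hint_maj, show (-3 : ℝ) = -(3 : ℕ) by norm_num,
          show (-1 : ℝ) = -(1 : ℕ) by norm_num, hrpow ht, hrpow ht]
        field_simp

lemma cube_mul_setIntegral_Ioi_div_pow_four_le_of_antitoneOn {f f' : ℝ → ℝ} {t : ℝ}
    (ht : 0 < t) (hf : ∀ s ∈ Ici t, HasDerivAt f (f' s) s)
    (hanti : AntitoneOn (fun s => f' s / s) (Ici t))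
    (hint : IntegrableOn (fun ξ => f ξ / ξ ^ 4) (Ioi t)) :
    t ^ 3 * ∫ ξ in Ioi t, f ξ / ξ ^ 4 ≤ 1 / 3 * (f t + t * f' t) := by
  have hle (ξ : ℝ) (hξ : ξ ∈ Ioi t) :
      f ξ ≤ (f t - f' t * t / 2) + f' t / t / 2 * ξ ^ 2 :=
    (le_add_mul_sq_sub_sq_of_antitoneOn_deriv_div_self hf hanti ht (le_of_lt hξ)).trans_eq
      (by field_simp; ring)
  refine (cube_mul_setIntegral_Ioi_div_pow_four_le ht hint hle).trans_eq ?_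
  field_simp
  ring

lemma HasDerivAt.mul_le_mul_of_monotoneOn_div {f g : ℝ → ℝ} {f' g' a t : ℝ}
    (hf : HasDerivAt f f' t) (hg : HasDerivAt g g' t) (hgt : 0 < g t)
    (hmono : MonotoneOn (fun s => f s / g s) (Ioi a)) (hat : a < t) :
    f t * g' ≤ f' * g t := by
  have hacc : AccPt t (𝓟 (Ici t)) := by
    rw [accPt_principal_iff_nhdsWithin]
    simpa using (inferInstance : (𝓝[>] t).NeBot)
  have hderiv := ((hf.div hg hgt.ne').hasDerivWithinAt (s := Ici t)).nonneg_of_monotoneOn hacc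
    (hmono.mono (Ici_subset_Ioi.2 hat))
  rwa [le_div_iff₀ (by positivity), zero_mul, sub_nonneg] at hderiv

lemma natCast_mul_div_log_le_mul_of_monotoneOn {f : ℝ → ℝ} {f' a t : ℝ} (n : ℕ)
    (hf : HasDerivAt f f' t) (hmono : MonotoneOn (fun s => f s / log s ^ n) (Ioi a))
    (hat : a < t) (ht : 1 < t) :
    n * f t / log t ≤ t * f' := by
  have hL : 0 < log t := log_pos ht
  have hg := (hasDerivAt_log (by positivity : t ≠ 0)).fun_pow n
  have hpow : (n : ℝ) * log t ^ (n - 1) * log t = n * log t ^ n := by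
    cases n <;> simp [pow_succ, mul_assoc]
  have hmul : n * f t * log t ^ n ≤ t * f' * log t * log t ^ n := calc
    _ = t * log t * (f t * (n * log t ^ (n - 1) * t⁻¹)) := by
      field_simp
      linear_combination -f t * hpow
    _ ≤ t * log t * (f' * log t ^ n) := mul_le_mul_of_nonneg_left
      (hf.mul_le_mul_of_monotoneOn_div hg (by positivity) hmono hat) (by positivity)
    _ = _ := by ring
  rw [div_le_iff₀ hL]
  exact le_of_mul_le_mul_right hmul (pow_pos hL n)

lemma mul_rpow_one_third_div_le_div_rpow_two_thirds {c x a L : ℝ} (hx : 0 < x) (hL : 0 < L)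
    (h : c * x / L ≤ a) : c * x ^ (1 / 3 : ℝ) / L ≤ a / x ^ (2 / 3 : ℝ) := by
  rw [div_le_div_iff₀ hL (by positivity), mul_assoc, ← rpow_add hx]
  norm_num
  rwa [div_le_iff₀ hL] at h

lemma rpow_one_third_mul_rpow_two_thirds_le {x y a : ℝ} (hx : 0 ≤ x) (hy : 0 ≤ y)
    (h : x * y ^ 2 ≤ a ^ 3) : x ^ (1 / 3 : ℝ) * y ^ (2 / 3 : ℝ) ≤ a := by
  have ha : 0 ≤ a :=
    (Odd.pow_nonneg_iff (n := 3) ⟨1, rfl⟩).1 ((by positivity : 0 ≤ x * y ^ 2).trans h)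
  calc x ^ (1 / 3 : ℝ) * y ^ (2 / 3 : ℝ) = (x * y ^ 2) ^ ((3 : ℕ)⁻¹ : ℝ) := by
        rw [mul_rpow hx (by positivity), ← rpow_natCast_mul hy]
        norm_num
    _ ≤ (a ^ 3) ^ ((3 : ℕ)⁻¹ : ℝ) := by gcongr
    _ = a := pow_rpow_inv_natCast ha (by norm_num)

lemma rpow_one_third_div_pow_three_le_div_rpow_two_thirds {x y a L : ℝ} (hx : 0 ≤ x)
    (hy : 0 < y) (hL : 1 ≤ L) (hxa : 3 * x / L ≤ a) (hya : y ≤ 1 / 3 * (x + a)) :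
    (x / L ^ 3) ^ (1 / 3 : ℝ) ≤ a / y ^ (2 / 3 : ℝ) := by
  have hL0 : 0 < L := by linarith
  rw [div_le_iff₀ hL0] at hxa
  have ha : 0 ≤ a := by nlinarith
  have hyL : y ≤ a * L := by nlinarith
  rw [le_div_iff₀ (by positivity)]
  refine rpow_one_third_mul_rpow_two_thirds_le (by positivity) hy.le ?_
  have hxL : x / L ^ 3 ≤ a / L ^ 2 := by
    rw [div_le_div_iff₀ (by positivity) (by positivity)]
    nlinarith [pow_pos hL0 2]
  calc x / L ^ 3 * y ^ 2 ≤ a / L ^ 2 * (a * L) ^ 2 :=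
        mul_le_mul hxL (pow_le_pow_left₀ hy.le hyL 2) (by positivity) (by positivity)
    _ = a ^ 3 := by field_simp

lemma setIntegral_Ioi_pos {f : ℝ → ℝ} {t : ℝ} (hf : ∀ ξ ∈ Ioi t, 0 < f ξ)
    (hint : IntegrableOn f (Ioi t)) : 0 < ∫ ξ in Ioi t, f ξ := by
  refine (setIntegral_pos_iff_support_of_nonneg_ae ?_ hint).2 ?_
  · filter_upwards [ae_restrict_mem measurableSet_Ioi] with ξ hξ using (hf ξ hξ).le
  · rw [inter_eq_right.2 fun ξ hξ => Function.mem_support.2 (hf ξ hξ).ne', volume_Ioi]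
    exact ENNReal.zero_lt_top

theorem stmt17_general (φ φ' : ℝ → ℝ)
    (hpos : ∀ t > Real.exp 1, 0 < φ t)
    (hderiv : ∀ t > Real.exp 1, HasDerivAt φ (φ' t) t)
    (hratio : AntitoneOn (fun t => φ' t / t) (Ioi (Real.exp 1)))
    (hlogmono : MonotoneOn (fun t => φ t / (Real.log t) ^ 3) (Ioi (Real.exp 1)))
    (hlogtop : Tendsto (fun t => φ t / (Real.log t) ^ 3) atTop atTop)
    (hint : ∀ t > Real.exp 1, IntegrableOn (fun ξ => φ ξ / ξ ^ 4) (Ioi t)) :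
    (∀ t > Real.exp 1,
      t ^ 3 * (∫ ξ in Ioi t, φ ξ / ξ ^ 4) ≤ (1 / 3) * (φ t + t * φ' t)) ∧
    (∀ t > Real.exp 1,
      t * φ' t / (φ t) ^ ((2:ℝ)/3) ≥ 3 * (φ t) ^ ((1:ℝ)/3) / Real.log t) ∧
    Tendsto (fun t => t * φ' t / (t ^ 3 * ∫ ξ in Ioi t, φ ξ / ξ ^ 4) ^ ((2:ℝ)/3))
      atTop atTop := by
  have hlog (t : ℝ) (ht : exp 1 < t) : 1 < log t := by
    rwa [lt_log_iff_exp_lt (exp_pos 1 |>.trans ht)]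
  have hlog_le (t : ℝ) (ht : exp 1 < t) : 3 * φ t / log t ≤ t * φ' t := by
    exact_mod_cast natCast_mul_div_log_le_mul_of_monotoneOn 3 (hderiv t ht) hlogmono ht
      (one_lt_exp_iff.2 one_pos |>.trans ht)
  have hintegral (t : ℝ) (ht : exp 1 < t) :
      t ^ 3 * (∫ ξ in Ioi t, φ ξ / ξ ^ 4) ≤ 1 / 3 * (φ t + t * φ' t) :=
    cube_mul_setIntegral_Ioi_div_pow_four_le_of_antitoneOn (exp_pos 1 |>.trans ht)
      (fun s hs => hderiv s (ht.trans_le hs)) (hratio.mono (Ici_subset_Ioi.2 ht)) (hint t ht)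
  refine ⟨hintegral, fun t ht => mul_rpow_one_third_div_le_div_rpow_two_thirds (hpos t ht)
    (by linarith [hlog t ht]) (hlog_le t ht), ?_⟩
  refine tendsto_atTop_mono' atTop ?_
    ((tendsto_rpow_atTop (by norm_num : (0 : ℝ) < 1 / 3)).comp hlogtop)
  filter_upwards [eventually_gt_atTop (exp 1)] with t ht
  have ht0 : 0 < t := exp_pos 1 |>.trans ht
  have hI : 0 < t ^ 3 * ∫ ξ in Ioi t, φ ξ / ξ ^ 4 := mul_pos (by positivity) <|
    setIntegral_Ioi_pos (fun ξ hξ => div_pos (hpos ξ (ht.trans hξ)) (pow_pos (ht0.trans hξ) 4))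
      (hint t ht)
  exact rpow_one_third_div_pow_three_le_div_rpow_two_thirds (hpos t ht).le hI (hlog t ht).le
    (hlog_le t ht) (hintegral t ht)

theorem stmt17 (φ φ' : ℝ → ℝ)
    (hpos : ∀ t > Real.exp 1, 0 < φ t)
    (hderiv : ∀ t > Real.exp 1, HasDerivAt φ (φ' t) t)
    (hcont : ContinuousOn φ' (Ioi (Real.exp 1)))
    (hratio : AntitoneOn (fun t => φ' t / t) (Ioi (Real.exp 1)))
    (hlogmono : MonotoneOn (fun t => φ t / (Real.log t) ^ 3) (Ioi (Real.exp 1)))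
    (hlogtop : Tendsto (fun t => φ t / (Real.log t) ^ 3) atTop atTop)
    (hint : ∀ t > Real.exp 1, IntegrableOn (fun ξ => φ ξ / ξ ^ 4) (Ioi t)) :
    (∀ t > Real.exp 1,
      t ^ 3 * (∫ ξ in Ioi t, φ ξ / ξ ^ 4) ≤ (1 / 3) * (φ t + t * φ' t)) ∧
    (∀ t > Real.exp 1,
      t * φ' t / (φ t) ^ ((2:ℝ)/3) ≥ 3 * (φ t) ^ ((1:ℝ)/3) / Real.log t) ∧
    Tendsto (fun t => t * φ' t / (t ^ 3 * ∫ ξ in Ioi t, φ ξ / ξ ^ 4) ^ ((2:ℝ)/3))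
      atTop atTop :=
  stmt17_general φ φ' hpos hderiv hratio hlogmono hlogtop hint
end

section
/- Let q ∈ C³(0,∞) be concave with q'' nondecreasing, q''(y) → 0, y²|q''(y)| → ∞, and |q''|^{3/2}/q''' → ∞ as y → ∞. Then there exists a function η(y) ≤ y/2 such that η(y)√|q''(y)| → ∞, η(y)/y → 0, and sup_{|y−t| ≤ η(t)} |q''(y)/q''(t) − 1| → 0 as t → ∞. -/
/-!
Put f = |q''| and u = f^{-1/2}. Then |u'| = q'''/(2|q''|^{3/2}) = 1/(2M) with
M = |q''|^{3/2}/q''' → ∞, so on [t/2, ∞) we have |u'| ≤ 1/(2m(t)), where m(t) = inf_{y ≥ t/2} M(y)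
also tends to ∞. By the mean value theorem, |u(y)/u(t) - 1| ≤ η(t)√f(t)/(2m(t)) whenever
|y - t| ≤ η(t) ≤ t/2, and f(y)/f(t) = (u(t)/u(y))², so the ratio is within O(1/√m(t)) of 1 as soon
as η(t)√f(t) ≤ √m(t). Taking η(t)√f(t) = √min(m(t), t√f(t)), capped so that η(t) ≤ t/2, makes
η√f → ∞ while η(t)/t ≤ (t√f(t))^{-1/2} → 0.
-/

open Set Filter

noncomputable def runningInf (F : ℝ → ℝ) (t : ℝ) : ℝ :=
  sInf (F '' Ici t)

lemma eventually_runningInf_le {F : ℝ → ℝ} (hF : Tendsto F atTop atTop) :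
    ∀ᶠ t in atTop, ∀ y, t ≤ y → runningInf F t ≤ F y := by
  obtain ⟨T, hT⟩ := eventually_atTop.mp (hF.eventually_ge_atTop 0)
  filter_upwards [eventually_ge_atTop T] with t ht y hy
  refine csInf_le ⟨0, ?_⟩ (mem_image_of_mem F hy)
  rintro _ ⟨z, hz, rfl⟩
  exact hT z (ht.trans hz)

lemma tendsto_runningInf {F : ℝ → ℝ} (hF : Tendsto F atTop atTop) :
    Tendsto (runningInf F) atTop atTop := by
  rw [tendsto_atTop] at hF ⊢
  intro b
  obtain ⟨T, hT⟩ := eventually_atTop.mp (hF b)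
  filter_upwards [eventually_ge_atTop T] with t ht
  refine le_csInf (nonempty_Ici.image F) ?_
  rintro _ ⟨z, hz, rfl⟩
  exact hT z (ht.trans hz)

lemma abs_inv_sq_sub_one_le {x δ : ℝ} (hδ : δ ≤ 1 / 2) (hx : |x - 1| ≤ δ) :
    |(x ^ 2)⁻¹ - 1| ≤ 10 * δ := by
  obtain ⟨hl, hu⟩ := abs_le.mp hx
  have hx0 : 0 < x := by linarith
  have hx2 : 0 < x ^ 2 := by positivity
  have key : |(x ^ 2)⁻¹ - 1| = |x - 1| * (1 + x) / x ^ 2 := by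
    rw [show (x ^ 2)⁻¹ - 1 = (1 - x) * (1 + x) / x ^ 2 by field_simp; ring,
      abs_div, abs_mul, abs_sub_comm, abs_of_pos (by linarith : 0 < 1 + x), abs_of_pos hx2]
  have hx2' : 1 / 4 ≤ x ^ 2 := by nlinarith
  rw [key, div_le_iff₀ hx2]
  calc |x - 1| * (1 + x) ≤ δ * (5 / 2) := by
        nlinarith [abs_nonneg (x - 1)]
    _ ≤ 10 * δ * x ^ 2 := by nlinarith [(abs_nonneg (x - 1)).trans hx]

lemma HasDerivAt.inv_sqrt {f : ℝ → ℝ} {d x : ℝ} (hf : HasDerivAt f d x) (hx : 0 < f x) :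
    HasDerivAt (fun y => (√(f y))⁻¹) (-d / (2 * f x ^ ((3 : ℝ) / 2))) x := by
  have hs : 0 < √(f x) := Real.sqrt_pos.mpr hx
  refine ((hf.sqrt hx.ne').inv hs.ne').congr_deriv ?_
  rw [show (3 : ℝ) / 2 = 1 + 1 / 2 by norm_num, Real.rpow_add hx, Real.rpow_one,
    ← Real.sqrt_eq_rpow, sq, Real.mul_self_sqrt hx.le]
  field_simp

lemma tendsto_mul_sqrt_of_tendsto_sq_mul {f : ℝ → ℝ}
    (hf : Tendsto (fun y => y ^ 2 * f y) atTop atTop) :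
    Tendsto (fun y => y * √(f y)) atTop atTop := by
  refine (Real.tendsto_sqrt_atTop.comp hf).congr' ?_
  filter_upwards [eventually_ge_atTop 0] with y hy
  simp [Real.sqrt_mul (sq_nonneg y), Real.sqrt_sq hy]

section

variable {f f' : ℝ → ℝ} (hf : ∀ y ∈ Ioi (0 : ℝ), 0 < f y)
  (hd : ∀ y ∈ Ioi (0 : ℝ), HasDerivAt f (f' y) y)
include hf hd

lemma abs_inv_sqrt_sub_le {a b m : ℝ} (ha : 0 < a) (hm : 0 < m)
    (hM : ∀ y ∈ Icc a b, m ≤ f y ^ ((3 : ℝ) / 2) / |f' y|) {y t : ℝ}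
    (hy : y ∈ Icc a b) (ht : t ∈ Icc a b) :
    |(√(f y))⁻¹ - (√(f t))⁻¹| ≤ |y - t| / (2 * m) := by
  have hpos : ∀ x ∈ Icc a b, 0 < x := fun x hx => ha.trans_le hx.1
  have hbound : ∀ x ∈ Icc a b, ‖-f' x / (2 * f x ^ ((3 : ℝ) / 2))‖ ≤ (2 * m)⁻¹ := by
    intro x hx
    have hp : 0 < f x ^ ((3 : ℝ) / 2) := Real.rpow_pos_of_pos (hf x (hpos x hx)) _
    calc ‖-f' x / (2 * f x ^ ((3 : ℝ) / 2))‖ = (2 * (f x ^ ((3 : ℝ) / 2) / |f' x|))⁻¹ := by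
          rw [Real.norm_eq_abs, abs_div, abs_neg, abs_of_pos (mul_pos two_pos hp), mul_inv, inv_div]
          ring
      _ ≤ (2 * m)⁻¹ := by gcongr; exact hM x hx
  have h := (convex_Icc a b).norm_image_sub_le_of_norm_hasDerivWithin_le
    (fun x hx => ((hd x (hpos x hx)).inv_sqrt (hf x (hpos x hx))).hasDerivWithinAt)
    hbound ht hy
  rw [Real.norm_eq_abs, Real.norm_eq_abs] at h
  rwa [div_eq_inv_mul]

lemma abs_div_sub_one_le {t r m : ℝ} (hr : 0 ≤ r) (htr : 0 < t - r) (hm : 1 ≤ m)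
    (hM : ∀ y ∈ Icc (t - r) (t + r), m ≤ f y ^ ((3 : ℝ) / 2) / |f' y|)
    (hrm : r * √(f t) ≤ √m) {y : ℝ} (hy : y ∈ Icc (t - r) (t + r)) :
    |f y / f t - 1| ≤ 5 / √m := by
  have ht : t ∈ Icc (t - r) (t + r) := ⟨by linarith, by linarith⟩
  have hft := hf t (htr.trans_le ht.1)
  have hfy := hf y (htr.trans_le hy.1)
  have hst : 0 < √(f t) := Real.sqrt_pos.mpr hft
  have hsm : 1 ≤ √m := Real.one_le_sqrt.mpr hm
  have hvar := abs_inv_sqrt_sub_le hf hd htr (by linarith) hM hy ht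
  have hyt : |y - t| ≤ r := abs_sub_le_iff.mpr ⟨by linarith [hy.2], by linarith [hy.1]⟩
  have hδ : |(√(f y))⁻¹ / (√(f t))⁻¹ - 1| ≤ 1 / (2 * √m) := by
    rw [div_sub_one (inv_ne_zero hst.ne'), abs_div, abs_inv, abs_of_pos hst, div_inv_eq_mul]
    calc |(√(f y))⁻¹ - (√(f t))⁻¹| * √(f t) ≤ r / (2 * m) * √(f t) := by
          gcongr; exact hvar.trans (by gcongr)
      _ ≤ √m / (2 * m) := by rw [div_mul_eq_mul_div]; gcongr
      _ = 1 / (2 * √m) := by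
          rw [div_eq_div_iff (by positivity) (by positivity)]
          linear_combination 2 * Real.mul_self_sqrt (by linarith : 0 ≤ m)
  have hratio : ((√(f y))⁻¹ / (√(f t))⁻¹) ^ 2 = (f y / f t)⁻¹ := by
    rw [div_pow, inv_pow, inv_pow, Real.sq_sqrt hfy.le, Real.sq_sqrt hft.le, inv_div_inv, inv_div]
  have hδ_le : 1 / (2 * √m) ≤ 1 / 2 := by gcongr; linarith
  calc |f y / f t - 1| ≤ 10 * (1 / (2 * √m)) := by
        simpa only [hratio, inv_inv] using abs_inv_sq_sub_one_le hδ_le hδ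
    _ = 5 / √m := by ring

end

noncomputable def windowRadius (f M : ℝ → ℝ) (t : ℝ) : ℝ :=
  min (t / 2) (√(min (runningInf M (t / 2)) (t * √(f t))) / √(f t))

section

variable {f M : ℝ → ℝ}

lemma windowRadius_le (t : ℝ) : windowRadius f M t ≤ t / 2 :=
  min_le_left _ _

lemma half_le_sub_windowRadius (t : ℝ) : t / 2 ≤ t - windowRadius f M t := by
  linarith [windowRadius_le (f := f) (M := M) t]

lemma windowRadius_nonneg {t : ℝ} (ht : 0 ≤ t) : 0 ≤ windowRadius f M t :=
  le_min (by linarith) (by positivity)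

lemma windowRadius_mul_sqrt {t : ℝ} (ht : 0 < f t) :
    windowRadius f M t * √(f t) =
      min (t * √(f t) / 2) (√(min (runningInf M (t / 2)) (t * √(f t)))) := by
  rw [windowRadius, min_mul_of_nonneg _ _ (Real.sqrt_nonneg _),
    div_mul_cancel₀ _ (Real.sqrt_pos.mpr ht).ne', div_mul_eq_mul_div]

lemma tendsto_windowRadius_mul_sqrt (hf : ∀ y ∈ Ioi (0 : ℝ), 0 < f y)
    (hg : Tendsto (fun t => t * √(f t)) atTop atTop) (hM : Tendsto M atTop atTop) :
    Tendsto (fun t => windowRadius f M t * √(f t)) atTop atTop := by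
  have hm : Tendsto (fun t => runningInf M (t / 2)) atTop atTop :=
    (tendsto_runningInf hM).comp (tendsto_id.atTop_div_const two_pos)
  refine (tendsto_inf_atTop _ (hg.atTop_div_const two_pos)
    (Real.tendsto_sqrt_atTop.comp (tendsto_inf_atTop _ hm hg))).congr' ?_
  filter_upwards [eventually_gt_atTop 0] with t ht
  exact (windowRadius_mul_sqrt (hf t ht)).symm

lemma tendsto_windowRadius_div (hf : ∀ y ∈ Ioi (0 : ℝ), 0 < f y)
    (hg : Tendsto (fun t => t * √(f t)) atTop atTop) :
    Tendsto (fun t => windowRadius f M t / t) atTop (nhds 0) := by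
  refine squeeze_zero' ?_ ?_ ((tendsto_inv_atTop_zero.comp Real.tendsto_sqrt_atTop).comp hg)
  · filter_upwards [eventually_gt_atTop 0] with t ht
    exact div_nonneg (windowRadius_nonneg ht.le) ht.le
  filter_upwards [eventually_gt_atTop 0, hg.eventually_gt_atTop 0] with t ht hgt
  have hs : 0 < √(f t) := Real.sqrt_pos.mpr (hf t ht)
  calc windowRadius f M t / t = windowRadius f M t * √(f t) / (t * √(f t)) := by
        field_simp
    _ ≤ √(t * √(f t)) / (t * √(f t)) := by
        rw [windowRadius_mul_sqrt (hf t ht)]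
        gcongr
        exact (min_le_right _ _).trans (Real.sqrt_le_sqrt (min_le_right _ _))
    _ = (√(t * √(f t)))⁻¹ := by rw [Real.sqrt_div_self', one_div]

lemma tendsto_sSup_abs_div_sub_one {f' : ℝ → ℝ} (hf : ∀ y ∈ Ioi (0 : ℝ), 0 < f y)
    (hd : ∀ y ∈ Ioi (0 : ℝ), HasDerivAt f (f' y) y)
    (hM : Tendsto (fun y => f y ^ ((3 : ℝ) / 2) / |f' y|) atTop atTop) :
    Tendsto (fun t => sSup ((fun y => |f y / f t - 1|) ''
      Icc (t - windowRadius f (fun y => f y ^ ((3 : ℝ) / 2) / |f' y|) t)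
        (t + windowRadius f (fun y => f y ^ ((3 : ℝ) / 2) / |f' y|) t))) atTop (nhds 0) := by
  set M := fun y => f y ^ ((3 : ℝ) / 2) / |f' y|
  have hhalf : Tendsto (fun t : ℝ => t / 2) atTop atTop := tendsto_id.atTop_div_const two_pos
  have hm : Tendsto (fun t => runningInf M (t / 2)) atTop atTop :=
    (tendsto_runningInf hM).comp hhalf
  refine squeeze_zero' (Eventually.of_forall fun t => Real.sSup_nonneg ?_) ?_
    ((tendsto_const_nhds (x := (5 : ℝ))).div_atTop (Real.tendsto_sqrt_atTop.comp hm))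
  · rintro _ ⟨y, -, rfl⟩
    exact abs_nonneg _
  filter_upwards [eventually_gt_atTop 0, hm.eventually_ge_atTop 1,
    hhalf.eventually (eventually_runningInf_le hM)]
    with t ht hm1 hmM
  refine Real.sSup_le ?_ (div_nonneg (by norm_num) (Real.sqrt_nonneg _))
  rintro _ ⟨y, hy, rfl⟩
  have hwindow := half_le_sub_windowRadius (f := f) (M := M) t
  refine abs_div_sub_one_le hf hd (windowRadius_nonneg ht.le) (by linarith) hm1
    (fun x hx => hmM x (hwindow.trans hx.1)) ?_ hy
  rw [windowRadius_mul_sqrt (hf t ht)]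
  exact (min_le_right _ _).trans (Real.sqrt_le_sqrt (min_le_left _ _))

end

theorem stmt18_general (q'' q''' : ℝ → ℝ)
    (hd3 : ∀ y ∈ Ioi (0:ℝ), HasDerivAt q'' (q''' y) y)
    (hneg : ∀ y ∈ Ioi (0:ℝ), q'' y < 0)
    (hq3nonneg : ∀ y ∈ Ioi (0:ℝ), 0 ≤ q''' y)
    (hy2q2 : Tendsto (fun y => y ^ 2 * |q'' y|) atTop atTop)
    (hq32 : Tendsto (fun y => |q'' y| ^ ((3:ℝ)/2) / q''' y) atTop atTop) :
    ∃ η : ℝ → ℝ,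
      (∀ y ≥ (1:ℝ), η y ≤ y / 2) ∧
      Tendsto (fun y => η y * Real.sqrt |q'' y|) atTop atTop ∧
      Tendsto (fun y => η y / y) atTop (nhds 0) ∧
      Tendsto (fun t => sSup ((fun y => |q'' y / q'' t - 1|) '' Icc (t - η t) (t + η t)))
        atTop (nhds 0) := by
  have hf : ∀ y ∈ Ioi (0 : ℝ), 0 < |q'' y| := fun y hy => abs_pos.mpr (hneg y hy).ne
  have hd : ∀ y ∈ Ioi (0 : ℝ), HasDerivAt (fun y => |q'' y|) (-q''' y) y := fun y hy =>
    ((hasDerivAt_abs_neg (hneg y hy)).comp y (hd3 y hy)).congr_deriv (neg_one_mul _)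
  have hM : Tendsto (fun y => |q'' y| ^ ((3 : ℝ) / 2) / |-q''' y|) atTop atTop := by
    refine hq32.congr' ?_
    filter_upwards [eventually_gt_atTop 0] with y hy
    rw [abs_neg, abs_of_nonneg (hq3nonneg y hy)]
  have hg := tendsto_mul_sqrt_of_tendsto_sq_mul hy2q2
  refine ⟨windowRadius _ _, fun y _ => windowRadius_le y, tendsto_windowRadius_mul_sqrt hf hg hM,
    tendsto_windowRadius_div hf hg, (tendsto_sSup_abs_div_sub_one hf hd hM).congr' ?_⟩
  filter_upwards [eventually_gt_atTop 0] with t ht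
  refine congrArg sSup (image_congr fun y hy => ?_)
  have hy0 : 0 < y := (half_pos ht).trans_le ((half_le_sub_windowRadius t).trans hy.1)
  rw [← abs_div, abs_of_pos (div_pos_of_neg_of_neg (hneg y hy0) (hneg t ht))]

theorem stmt18 (q q' q'' q''' : ℝ → ℝ)
    (hd1 : ∀ y ∈ Ioi (0:ℝ), HasDerivAt q (q' y) y)
    (hd2 : ∀ y ∈ Ioi (0:ℝ), HasDerivAt q' (q'' y) y)
    (hd3 : ∀ y ∈ Ioi (0:ℝ), HasDerivAt q'' (q''' y) y)
    (hcont : ContinuousOn q''' (Ioi 0))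
    (hneg : ∀ y ∈ Ioi (0:ℝ), q'' y < 0)
    (hq2mono : MonotoneOn q'' (Ioi 0))
    (hq2lim : Tendsto q'' atTop (nhds 0))
    (hq3nonneg : ∀ y ∈ Ioi (0:ℝ), 0 ≤ q''' y)
    (hy2q2 : Tendsto (fun y => y ^ 2 * |q'' y|) atTop atTop)
    (hq32 : Tendsto (fun y => |q'' y| ^ ((3:ℝ)/2) / q''' y) atTop atTop) :
    ∃ η : ℝ → ℝ,
      (∀ y ≥ (1:ℝ), η y ≤ y / 2) ∧
      Tendsto (fun y => η y * Real.sqrt |q'' y|) atTop atTop ∧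
      Tendsto (fun y => η y / y) atTop (nhds 0) ∧
      Tendsto (fun t => sSup ((fun y => |q'' y / q'' t - 1|) '' Icc (t - η t) (t + η t)))
        atTop (nhds 0) :=
  stmt18_general q'' q''' hd3 hneg hq3nonneg hy2q2 hq32
end
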